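/- arXiv:1906.01139 — 10 statements merged into one kernel-verified Lean document; each statement's English description precedes it below -/
import Mathlib

section
/- Fix constants κ>0 and β∈(0,1). The equation h_κ(α)=0 has exactly one solution α* in the open interval (0,β). Moreover, the rescaled function α ↦ α^{1−κ}·h_κ(α) is strictly decreasing on (0,β], it is positive for all α sufficiently close to 0, and it is negative at α=β. -/
/-!
Put `g(α) = α^(1-κ) h_κ(α)`. The identity `(κ - 1) ∫_α^1 t^(κ-2) dt = 1 - α^(κ-1)` (trivially true
for `κ = 1`) gives `g'(α) = κ α^(-κ-1) (α - β)`, which is negative on `(0, β)`. Since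
`α ∫_α^1 t^(κ-2) dt → 0` as `α → 0⁺`, we get `α h_κ(α) → β > 0`, while
`h_κ(β) = -∫_β^1 t^(κ-2) dt < 0`. The intermediate value theorem and strict monotonicity of `g`
then give exactly one zero in `(0, β)`.
-/

open Set Filter Topology Interval

lemma zero_notMem_uIcc_of_pos {a b : ℝ} (ha : 0 < a) (hb : 0 < b) : (0 : ℝ) ∉ [[a, b]] := by
  rw [mem_uIcc]
  rintro (⟨h, -⟩ | ⟨h, -⟩) <;> linarith

lemma sub_one_mul_integral_rpow_sub_two (κ : ℝ) {a : ℝ} (ha : 0 < a) :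
    (κ - 1) * ∫ t in a..1, t ^ (κ - 2) = 1 - a ^ (κ - 1) := by
  rcases eq_or_ne κ 1 with rfl | hκ
  · simp
  have hr : κ - 2 ≠ -1 := fun h => hκ (by linarith)
  rw [integral_rpow (Or.inr ⟨hr, zero_notMem_uIcc_of_pos ha one_pos⟩),
    show κ - 2 + 1 = κ - 1 by ring, Real.one_rpow, mul_div_cancel₀ _ (sub_ne_zero.mpr hκ)]

lemma hasDerivAt_integral_rpow_one (r : ℝ) {a : ℝ} (ha : 0 < a) :
    HasDerivAt (fun x => ∫ t in x..1, t ^ r) (-a ^ r) a :=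
  intervalIntegral.integral_hasDerivAt_left
    (intervalIntegral.intervalIntegrable_rpow (Or.inr (zero_notMem_uIcc_of_pos ha one_pos)))
    ((continuousOn_of_forall_continuousAt fun x (hx : 0 < x) =>
      Real.continuousAt_rpow_const x r (Or.inl hx.ne')).stronglyMeasurableAtFilter isOpen_Ioi a ha)
    (Real.continuousAt_rpow_const a r (Or.inl ha.ne'))

lemma tendsto_mul_integral_rpow_sub_two {κ : ℝ} (hκ : 0 < κ) :
    Tendsto (fun a => a * ∫ t in a..1, t ^ (κ - 2)) (𝓝[>] 0) (𝓝 0) := by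
  rcases eq_or_ne κ 1 with rfl | hκ1
  · have h := (tendsto_log_mul_rpow_nhdsGT_zero one_pos).neg
    rw [neg_zero] at h
    refine h.congr' (eventually_mem_nhdsWithin.mono fun a (ha : 0 < a) => ?_)
    rw [show (1 : ℝ) - 2 = -1 by norm_num]
    simp_rw [Real.rpow_neg_one]
    rw [integral_inv_of_pos ha one_pos, Real.rpow_one, one_div, Real.log_inv]
    ring
  · have hpow : Tendsto (fun a : ℝ => a ^ κ) (𝓝[>] 0) (𝓝 0) := by
      simpa [Real.zero_rpow hκ.ne'] using
        ((Real.continuous_rpow_const hκ.le).tendsto 0).mono_left nhdsWithin_le_nhds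
    have hid : Tendsto (fun a : ℝ => a) (𝓝[>] 0) (𝓝 0) := nhdsWithin_le_nhds
    have h := (hid.sub hpow).div_const (κ - 1)
    rw [sub_zero, zero_div] at h
    refine h.congr' (eventually_mem_nhdsWithin.mono fun a (ha : 0 < a) => ?_)
    rw [eq_comm, eq_div_iff (sub_ne_zero.mpr hκ1), mul_comm _ (κ - 1), mul_left_comm,
      sub_one_mul_integral_rpow_sub_two κ ha, mul_sub, mul_one, ← Real.rpow_one_add' ha.le]
    <;> norm_num [hκ.ne']

noncomputable def hKappa (κ β α : ℝ) : ℝ := β / α - (∫ t in α..1, t ^ (κ - 2)) - 1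

noncomputable def scaledH (κ β α : ℝ) : ℝ := α ^ (1 - κ) * hKappa κ β α

lemma hasDerivAt_hKappa (κ β : ℝ) {a : ℝ} (ha : 0 < a) :
    HasDerivAt (hKappa κ β) (-β / a ^ 2 + a ^ (κ - 2)) a := by
  refine ((((hasDerivAt_const a β).div (hasDerivAt_id a) ha.ne').sub
    (hasDerivAt_integral_rpow_one (κ - 2) ha)).sub_const 1).congr_deriv ?_
  simp only [id]
  ring

lemma hasDerivAt_scaledH (κ β : ℝ) {a : ℝ} (ha : 0 < a) :
    HasDerivAt (scaledH κ β) (κ * a ^ (-κ - 1) * (a - β)) a := by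
  refine ((Real.hasDerivAt_rpow_const (p := 1 - κ) (Or.inl ha.ne')).mul
    (hasDerivAt_hKappa κ β ha)).congr_deriv ?_
  have hF := sub_one_mul_integral_rpow_sub_two κ ha
  set F := ∫ t in a..1, t ^ (κ - 2)
  set s := a ^ (-κ - 1)
  set t := a ^ (κ - 1)
  have e1 : a ^ (1 - κ) = a ^ 2 * s := by
    rw [← Real.rpow_natCast, ← Real.rpow_add ha]; norm_num; ring_nf
  have e2 : a ^ (1 - κ - 1) = a * s := by
    rw [show 1 - κ - 1 = 1 + (-κ - 1) by ring, Real.rpow_add ha, Real.rpow_one]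
  have e3 : a ^ (κ - 2) = t * a⁻¹ := by
    rw [← Real.rpow_neg_one, ← Real.rpow_add ha]; ring_nf
  rw [e1, e2, e3, hKappa]
  field_simp
  linear_combination a * s * hF

lemma continuousOn_scaledH (κ β : ℝ) : ContinuousOn (scaledH κ β) (Ioi 0) :=
  fun _ ha => (hasDerivAt_scaledH κ β ha).continuousAt.continuousWithinAt

lemma strictAntiOn_scaledH {κ : ℝ} (hκ : 0 < κ) (β : ℝ) : StrictAntiOn (scaledH κ β) (Ioc 0 β) :=
  strictAntiOn_of_deriv_neg (convex_Ioc 0 β)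
    ((continuousOn_scaledH κ β).mono Ioc_subset_Ioi_self) fun a ha => by
      rw [interior_Ioc] at ha
      rw [(hasDerivAt_scaledH κ β ha.1).deriv]
      exact mul_neg_of_pos_of_neg (by have := ha.1; positivity) (sub_neg.mpr ha.2)

lemma scaledH_self_neg (κ : ℝ) {β : ℝ} (hβ : β ∈ Ioo 0 1) : scaledH κ β β < 0 := by
  have hF : 0 < ∫ t in β..1, t ^ (κ - 2) :=
    intervalIntegral.intervalIntegral_pos_of_pos_on
      (intervalIntegral.intervalIntegrable_rpow (Or.inr (zero_notMem_uIcc_of_pos hβ.1 one_pos)))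
      (fun t ht => Real.rpow_pos_of_pos (hβ.1.trans ht.1) _) hβ.2
  rw [scaledH, hKappa, div_self hβ.1.ne', sub_sub_cancel_left]
  exact mul_neg_of_pos_of_neg (Real.rpow_pos_of_pos hβ.1 _) (neg_neg_of_pos hF)

lemma eventually_scaledH_pos {κ β : ℝ} (hκ : 0 < κ) (hβ : 0 < β) :
    ∀ᶠ a in 𝓝[>] 0, 0 < scaledH κ β a := by
  have hlim : Tendsto (fun a => (a * ∫ t in a..1, t ^ (κ - 2)) + a) (𝓝[>] 0) (𝓝 0) := by
    simpa using (tendsto_mul_integral_rpow_sub_two hκ).add nhdsWithin_le_nhds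
  filter_upwards [hlim.eventually_lt_const hβ, self_mem_nhdsWithin] with a hlt (ha : 0 < a)
  have hH : hKappa κ β a = (β - ((a * ∫ t in a..1, t ^ (κ - 2)) + a)) / a := by
    rw [hKappa]; field_simp; ring
  rw [scaledH, hH]
  exact mul_pos (Real.rpow_pos_of_pos ha _) (div_pos (sub_pos.mpr hlt) ha)

lemma existsUnique_zero_of_strictAntiOn {g : ℝ → ℝ} {a b : ℝ} (hab : a < b)
    (hcont : ContinuousOn g (Ioc a b)) (hanti : StrictAntiOn g (Ioc a b))
    (hpos : ∀ᶠ x in 𝓝[>] a, 0 < g x) (hb : g b < 0) :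
    ∃! x, x ∈ Ioo a b ∧ g x = 0 := by
  obtain ⟨x₀, hgx₀, hx₀⟩ := (hpos.and (Ioo_mem_nhdsGT hab)).exists
  have hsub : Icc x₀ b ⊆ Ioc a b := (Icc_subset_Ioc_iff hx₀.2.le).mpr ⟨hx₀.1, le_rfl⟩
  obtain ⟨c, hc, hgc⟩ := intermediate_value_Ioo' hx₀.2.le (hcont.mono hsub) ⟨hb, hgx₀⟩
  have hc' : c ∈ Ioo a b := ⟨hx₀.1.trans hc.1, hc.2⟩
  refine ⟨c, ⟨hc', hgc⟩, fun x ⟨hx, hgx⟩ => ?_⟩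
  exact hanti.injOn (Ioo_subset_Ioc_self hx) (Ioo_subset_Ioc_self hc') (hgx.trans hgc.symm)

/-- For constants `κ > 0` and `β ∈ (0,1)`, with
`h κ α = β/α − ∫_α^1 t^(κ−2) dt − 1`, the equation `h α = 0` has exactly one
solution `α*` in `(0,β)`; moreover `α ↦ α^(1−κ) · h α` is strictly decreasing
on `(0,β]`, positive for all `α` sufficiently close to `0`, and negative at `β`. -/
theorem stmt0 (κ β : ℝ) (hκ : 0 < κ) (hβ : β ∈ Set.Ioo (0:ℝ) 1)
    (h : ℝ → ℝ)
    (hdef : ∀ α, h α = β / α - (∫ t in α..(1:ℝ), t ^ (κ - 2)) - 1) :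
    (∃! α, α ∈ Set.Ioo (0:ℝ) β ∧ h α = 0) ∧
    StrictAntiOn (fun α => α ^ ((1:ℝ) - κ) * h α) (Set.Ioc (0:ℝ) β) ∧
    (∃ ε > (0:ℝ), ∀ α ∈ Set.Ioo (0:ℝ) ε, 0 < α ^ ((1:ℝ) - κ) * h α) ∧
    β ^ ((1:ℝ) - κ) * h β < 0 := by
  obtain rfl : h = hKappa κ β := funext hdef
  have hpos := eventually_scaledH_pos hκ hβ.1
  have hroot := existsUnique_zero_of_strictAntiOn hβ.1
    ((continuousOn_scaledH κ β).mono Ioc_subset_Ioi_self) (strictAntiOn_scaledH hκ β) hpos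
    (scaledH_self_neg κ hβ)
  refine ⟨(existsUnique_congr fun α => and_congr_right fun hα => ?_).mp hroot,
    strictAntiOn_scaledH hκ β, (nhdsGT_basis 0).eventually_iff.mp hpos, scaledH_self_neg κ hβ⟩
  exact mul_eq_zero_iff_left (Real.rpow_pos_of_pos hα.1 _).ne'
end

section
/- Fix constants κ>0 and β∈(0,1). For every α∈(0,β), the function g_κ is differentiable at α with derivative g_κ'(α) = −β·α^{1−κ}·h_κ(α)/(β−α)². -/
open Set Filter Topology

/-- For κ > 0 and β ∈ (0,1), with
`h α = β/α − ∫_α^1 t^(κ−2) dt − 1` and `g α = (∫_α^1 t^(−κ) dt)·β/(β−α)`,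
for every `α ∈ (0,β)` the function `g` is differentiable at `α` with derivative
`−β·α^(1−κ)·h α/(β−α)²`. -/
theorem stmt1 (κ β : ℝ) (hκ : 0 < κ) (hβ : β ∈ Set.Ioo (0:ℝ) 1)
    (h g : ℝ → ℝ)
    (hh : ∀ α, h α = β / α - (∫ t in α..(1:ℝ), t ^ (κ - 2)) - 1)
    (hg : ∀ α, g α = (∫ t in α..(1:ℝ), t ^ (-κ)) * β / (β - α)) :
    ∀ α ∈ Set.Ioo (0:ℝ) β,
      HasDerivAt g (-β * α ^ ((1:ℝ) - κ) * h α / (β - α) ^ 2) α := by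
  obtain ⟨hβ0, hβ1⟩ := hβ
  intro α hα
  obtain ⟨hα0, hαβ⟩ := hα
  have hα1 : α < 1 := hαβ.trans hβ1
  have hne : β - α ≠ 0 := sub_ne_zero.2 (ne_of_gt hαβ)
  have huIcc : uIcc α 1 = Icc α 1 := uIcc_of_le hα1.le
  have hInt : IntervalIntegrable (fun x : ℝ => x ^ (-κ)) MeasureTheory.volume α 1 := by
    apply ContinuousOn.intervalIntegrable
    intro t ht
    rw [huIcc] at ht
    exact (Real.continuousAt_rpow_const t (-κ)
      (Or.inl (ne_of_gt (lt_of_lt_of_le hα0 ht.1)))).continuousWithinAt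
  have hmeas : StronglyMeasurableAtFilter (fun x : ℝ => x ^ (-κ)) (𝓝 α) :=
    ContinuousAt.stronglyMeasurableAtFilter isOpen_Ioi
      (fun x hx => Real.continuousAt_rpow_const x (-κ) (Or.inl (ne_of_gt hx))) α hα0
  have hcα : ContinuousAt (fun x : ℝ => x ^ (-κ)) α :=
    Real.continuousAt_rpow_const α (-κ) (Or.inl (ne_of_gt hα0))
  have hF : HasDerivAt (fun u : ℝ => ∫ t in u..(1:ℝ), t ^ (-κ)) (-(α ^ (-κ))) α :=
    intervalIntegral.integral_hasDerivAt_left hInt hmeas hcα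
  have hD : HasDerivAt (fun u : ℝ => β - u) (-1) α := (hasDerivAt_id α).const_sub β
  have hG : HasDerivAt (fun u : ℝ => (∫ t in u..(1:ℝ), t ^ (-κ)) * β / (β - u))
      ((-(α ^ (-κ)) * β * (β - α) - ((∫ t in α..(1:ℝ), t ^ (-κ)) * β) * (-1)) / (β - α) ^ 2) α :=
    (hF.mul_const β).div hD hne
  have hgfun : g = fun u : ℝ => (∫ t in u..(1:ℝ), t ^ (-κ)) * β / (β - u) := funext hg
  rw [hgfun]
  convert hG using 1
  have key : α ^ ((1:ℝ) - κ) * (∫ t in α..(1:ℝ), t ^ (κ - 2)) = ∫ t in α..(1:ℝ), t ^ (-κ) := by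
    rcases eq_or_ne κ 1 with rfl | hκ1
    · norm_num
    · have h0 : (0:ℝ) ∉ uIcc α (1:ℝ) := by
        rw [huIcc]; intro h0; exact absurd h0.1 (not_le.2 hα0)
      have h1 : κ - 2 + 1 ≠ 0 := by intro hc; apply hκ1; linarith
      have h2 : -κ + 1 ≠ 0 := by intro hc; apply hκ1; linarith
      rw [integral_rpow (Or.inr ⟨by intro hc; apply hκ1; linarith [hc], h0⟩),
          integral_rpow (Or.inr ⟨by intro hc; apply hκ1; linarith [hc], h0⟩)]
      have e1 : α ^ ((1:ℝ) - κ) * α ^ (κ - 2 + 1) = 1 := by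
        rw [← Real.rpow_add hα0, show (1:ℝ) - κ + (κ - 2 + 1) = 0 by ring, Real.rpow_zero]
      have e4 : α ^ ((1:ℝ) - κ) * (1 - α ^ (κ - 2 + 1)) = -(1 - α ^ (-κ + 1)) := by
        rw [show -κ + 1 = (1:ℝ) - κ by ring]
        linear_combination -e1
      rw [Real.one_rpow, Real.one_rpow, show -κ + 1 = -(κ - 2 + 1) by ring,
          div_neg, ← mul_div_assoc, e4, neg_div]
      congr 3
      ring_nf
  rw [hh]
  have e3 : α ^ ((1:ℝ) - κ) = α * α ^ (-κ) := by
    rw [show (1:ℝ) - κ = 1 + -κ by ring, Real.rpow_add hα0, Real.rpow_one]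
  have hαne : α ≠ 0 := ne_of_gt hα0
  rw [div_eq_div_iff (by positivity) (by positivity)]
  rw [← key, e3]
  field_simp
  ring
end

section
/- Fix constants κ>0 and 0<β<α≤1. The function s ↦ q_κ(s,α) is strictly decreasing on (0,(β/(α−β))^{1/κ}] and strictly increasing on [(β/(α−β))^{1/κ},∞); it tends to +∞ as s→0⁺ and to 0 as s→∞. Consequently, the equation q_κ(s,α)=0 has exactly one solution s*_κ in (0,∞), and this solution satisfies (s*_κ)^κ < β/(α−β). -/
open Set Filter MeasureTheory

noncomputable def ff (κ : ℝ) (t : ℝ) : ℝ := t ^ (κ - 2) / (1 + t ^ κ)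

lemma one_add_pos (κ : ℝ) {t : ℝ} (ht : 0 < t) : 0 < 1 + t ^ κ := by positivity

lemma f_nonneg (κ : ℝ) {t : ℝ} (ht : 0 < t) : 0 ≤ ff κ t := by
  unfold ff; positivity

lemma f_le (κ : ℝ) {t : ℝ} (ht : 0 < t) : ff κ t ≤ t ^ (-2 : ℝ) := by
  have h1 : (0:ℝ) < t ^ κ := Real.rpow_pos_of_pos ht κ
  have : ff κ t ≤ t ^ (κ - 2) / t ^ κ := by
    apply div_le_div_of_nonneg_left (Real.rpow_nonneg ht.le _) h1 (by linarith)
  calc ff κ t ≤ t ^ (κ - 2) / t ^ κ := this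
    _ = t ^ (-2:ℝ) := by
        rw [← Real.rpow_sub ht]; ring_nf

lemma f_contOn (κ : ℝ) : ContinuousOn (ff κ) (Ioi 0) := by
  apply ContinuousOn.div
  · exact fun t ht => (Real.continuousAt_rpow_const t _ (Or.inl (ne_of_gt ht))).continuousWithinAt
  · exact continuousOn_const.add fun t ht => (Real.continuousAt_rpow_const t _ (Or.inl (ne_of_gt ht))).continuousWithinAt
  · intro t ht; exact ne_of_gt (one_add_pos κ ht)

lemma f_integrableOn (κ : ℝ) {s : ℝ} (hs : 0 < s) : IntegrableOn (ff κ) (Ioi s) := by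
  have hmeas : AEStronglyMeasurable (ff κ) (volume.restrict (Ioi s)) :=
    ((f_contOn κ).mono (Ioi_subset_Ioi hs.le)).aestronglyMeasurable measurableSet_Ioi
  refine (integrableOn_Ioi_rpow_of_lt (show (-2:ℝ) < -1 by norm_num) hs).mono' hmeas ?_
  filter_upwards [ae_restrict_mem measurableSet_Ioi] with t ht
  have ht0 : 0 < t := hs.trans ht
  rw [Real.norm_eq_abs, abs_of_nonneg (f_nonneg κ ht0)]
  exact f_le κ ht0

lemma split_int (κ : ℝ) {a b : ℝ} (ha : 0 < a) (hb : 0 < b) :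
    (∫ t in Ioi a, ff κ t) = (∫ t in a..b, ff κ t) + ∫ t in Ioi b, ff κ t := by
  rcases le_total a b with h | h
  · rw [intervalIntegral.integral_of_le h, ← setIntegral_union (Ioc_disjoint_Ioi le_rfl)
      measurableSet_Ioi ((f_integrableOn κ ha).mono_set Ioc_subset_Ioi_self) (f_integrableOn κ hb),
      Ioc_union_Ioi_eq_Ioi h]
  · have h2 : (∫ t in Ioi b, ff κ t) = (∫ t in Ioc b a, ff κ t) + ∫ t in Ioi a, ff κ t := by
      rw [← setIntegral_union (Ioc_disjoint_Ioi le_rfl) measurableSet_Ioi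
        ((f_integrableOn κ hb).mono_set Ioc_subset_Ioi_self) (f_integrableOn κ ha),
        Ioc_union_Ioi_eq_Ioi h]
    rw [intervalIntegral.integral_symm, intervalIntegral.integral_of_le h]
    linarith

lemma f_intervalIntegrable (κ : ℝ) {a b : ℝ} (ha : 0 < a) (hb : 0 < b) :
    IntervalIntegrable (ff κ) volume a b := by
  rw [intervalIntegrable_iff]
  exact (f_integrableOn κ (lt_min ha hb)).mono_set Ioc_subset_Ioi_self

lemma q_hasDeriv (κ β α : ℝ) (q : ℝ → ℝ)
    (hq : ∀ s, q s = β / s - α * ∫ t in Set.Ioi s, t ^ (κ - 2) / (1 + t ^ κ))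
    {x : ℝ} (hx : 0 < x) :
    HasDerivAt q (-β / x ^ 2 + α * ff κ x) x := by
  have hqf : ∀ s, q s = β / s - α * ∫ t in Set.Ioi s, ff κ t := hq
  set g : ℝ → ℝ := fun s => β / s - α * (∫ t in Ioi x, ff κ t) + α * ∫ t in x..s, ff κ t with hg
  have key : Set.EqOn q g (Ioi 0) := by
    intro s hs
    rw [hqf s, hg]
    simp only
    rw [split_int κ hx hs, intervalIntegral.integral_symm]
    ring
  have hd1 : HasDerivAt (fun s : ℝ => β / s) (-β / x ^ 2) x := by
    have := (hasDerivAt_inv (ne_of_gt hx)).const_mul β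
    simpa [div_eq_mul_inv, neg_div] using this
  have hd2 : HasDerivAt (fun s : ℝ => ∫ t in x..s, ff κ t) (ff κ x) x := by
    apply intervalIntegral.integral_hasDerivAt_right (f_intervalIntegrable κ hx hx)
    · exact ContinuousOn.stronglyMeasurableAtFilter isOpen_Ioi (f_contOn κ) x hx
    · exact (f_contOn κ).continuousAt (Ioi_mem_nhds hx)
  have hdg : HasDerivAt g (-β / x ^ 2 + α * ff κ x) x :=
    ((hd1.sub_const _).add (hd2.const_mul α))
  exact hdg.congr_of_eventuallyEq (eventuallyEq_of_mem (Ioi_mem_nhds hx) key)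

lemma m_rpow (κ : ℝ) (hκ : 0 < κ) {c : ℝ} (hc : 0 ≤ c) : (c ^ (1/κ)) ^ κ = c := by
  rw [← Real.rpow_mul hc, one_div, inv_mul_cancel₀ (ne_of_gt hκ), Real.rpow_one]

lemma deriv_sign_neg (κ β α : ℝ) {x : ℝ} (hx : 0 < x) (h : (α - β) * x ^ κ < β) :
    -β / x ^ 2 + α * ff κ x < 0 := by
  have hX : (0:ℝ) < x ^ κ := Real.rpow_pos_of_pos hx κ
  have hB : (0:ℝ) < 1 + x ^ κ := by linarith
  have hx2 : (0:ℝ) < x ^ 2 := by positivity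
  have hmul : x ^ (κ - 2) * x ^ 2 = x ^ κ := by
    rw [show (x:ℝ) ^ (2:ℕ) = x ^ ((2:ℕ):ℝ) from (Real.rpow_natCast x 2).symm,
      ← Real.rpow_add hx]
    norm_num
  have key : α * ff κ x < β / x ^ 2 := by
    rw [ff, ← mul_div_assoc, div_lt_div_iff₀ hB hx2]
    have : α * x ^ (κ - 2) * x ^ 2 = α * x ^ κ := by rw [mul_assoc, hmul]
    rw [this]
    nlinarith
  have hnd : -β / x ^ 2 = -(β / x ^ 2) := neg_div _ _
  linarith

lemma deriv_sign_pos (κ β α : ℝ) {x : ℝ} (hx : 0 < x) (h : β < (α - β) * x ^ κ) :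
    0 < -β / x ^ 2 + α * ff κ x := by
  have hX : (0:ℝ) < x ^ κ := Real.rpow_pos_of_pos hx κ
  have hB : (0:ℝ) < 1 + x ^ κ := by linarith
  have hx2 : (0:ℝ) < x ^ 2 := by positivity
  have hmul : x ^ (κ - 2) * x ^ 2 = x ^ κ := by
    rw [show (x:ℝ) ^ (2:ℕ) = x ^ ((2:ℕ):ℝ) from (Real.rpow_natCast x 2).symm,
      ← Real.rpow_add hx]
    norm_num
  have key : β / x ^ 2 < α * ff κ x := by
    rw [ff, ← mul_div_assoc, div_lt_div_iff₀ hx2 hB]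
    have : α * x ^ (κ - 2) * x ^ 2 = α * x ^ κ := by rw [mul_assoc, hmul]
    rw [this] at *
    nlinarith
  have hnd : -β / x ^ 2 = -(β / x ^ 2) := neg_div _ _
  linarith

lemma q_contOn (κ β α : ℝ) (q : ℝ → ℝ)
    (hq : ∀ s, q s = β / s - α * ∫ t in Set.Ioi s, t ^ (κ - 2) / (1 + t ^ κ))
    {D : Set ℝ} (hD : D ⊆ Ioi 0) : ContinuousOn q D := fun x hx =>
  ((q_hasDeriv κ β α q hq (hD hx)).continuousAt).continuousWithinAt

lemma q_anti (κ β α : ℝ) (hκ : 0 < κ) (hβ : 0 < β) (hβα : β < α) (q : ℝ → ℝ)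
    (hq : ∀ s, q s = β / s - α * ∫ t in Set.Ioi s, t ^ (κ - 2) / (1 + t ^ κ)) :
    StrictAntiOn q (Set.Ioc (0:ℝ) ((β / (α - β)) ^ (1/κ))) := by
  have hc : (0:ℝ) < β / (α - β) := div_pos hβ (by linarith)
  apply strictAntiOn_of_deriv_neg (convex_Ioc _ _)
    (q_contOn κ β α q hq (fun x hx => hx.1))
  intro x hx
  rw [interior_Ioc] at hx
  have hx0 : 0 < x := hx.1
  rw [(q_hasDeriv κ β α q hq hx0).deriv]
  apply deriv_sign_neg κ β α hx0
  have : x ^ κ < β / (α - β) := by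
    have := Real.rpow_lt_rpow hx0.le hx.2 hκ
    rwa [m_rpow κ hκ hc.le] at this
  rw [mul_comm, ← lt_div_iff₀ (by linarith : (0:ℝ) < α - β)]
  exact this

lemma q_mono (κ β α : ℝ) (hκ : 0 < κ) (hβ : 0 < β) (hβα : β < α) (q : ℝ → ℝ)
    (hq : ∀ s, q s = β / s - α * ∫ t in Set.Ioi s, t ^ (κ - 2) / (1 + t ^ κ)) :
    StrictMonoOn q (Set.Ici ((β / (α - β)) ^ (1/κ))) := by
  have hc : (0:ℝ) < β / (α - β) := div_pos hβ (by linarith)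
  have hm : (0:ℝ) < (β / (α - β)) ^ (1/κ) := Real.rpow_pos_of_pos hc _
  apply strictMonoOn_of_deriv_pos (convex_Ici _)
    (q_contOn κ β α q hq (fun x hx => lt_of_lt_of_le hm hx))
  intro x hx
  rw [interior_Ici] at hx
  have hx0 : 0 < x := hm.trans hx
  rw [(q_hasDeriv κ β α q hq hx0).deriv]
  apply deriv_sign_pos κ β α hx0
  have : β / (α - β) < x ^ κ := by
    have := Real.rpow_lt_rpow hm.le hx hκ
    rwa [m_rpow κ hκ hc.le] at this
  rw [mul_comm, ← div_lt_iff₀ (by linarith : (0:ℝ) < α - β)]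
  exact this

lemma I_nonneg (κ : ℝ) {s : ℝ} (hs : 0 < s) : 0 ≤ ∫ t in Ioi s, ff κ t :=
  setIntegral_nonneg measurableSet_Ioi fun t ht => f_nonneg κ (hs.trans ht)

lemma I_le (κ : ℝ) {s : ℝ} (hs : 0 < s) : (∫ t in Ioi s, ff κ t) ≤ s⁻¹ := by
  have h1 : (∫ t in Ioi s, ff κ t) ≤ ∫ t in Ioi s, t ^ (-2:ℝ) := by
    apply setIntegral_mono_on (f_integrableOn κ hs)
      (integrableOn_Ioi_rpow_of_lt (show (-2:ℝ) < -1 by norm_num) hs) measurableSet_Ioi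
    exact fun t ht => f_le κ (hs.trans ht)
  have h2 : (∫ t in Ioi s, t ^ (-2:ℝ)) = s⁻¹ := by
    rw [integral_Ioi_rpow_of_lt (show (-2:ℝ) < -1 by norm_num) hs]
    norm_num
    rw [Real.rpow_neg_one]
  linarith

lemma q_to_zero (κ β α : ℝ) (q : ℝ → ℝ) (hα0 : 0 ≤ α)
    (hq : ∀ s, q s = β / s - α * ∫ t in Set.Ioi s, t ^ (κ - 2) / (1 + t ^ κ)) :
    Filter.Tendsto q Filter.atTop (nhds 0) := by
  have hqf : ∀ s, q s = β / s - α * ∫ t in Set.Ioi s, ff κ t := hq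
  have h1 : Tendsto (fun s : ℝ => β / s) atTop (nhds 0) := by
    simpa [div_eq_mul_inv] using tendsto_inv_atTop_zero.const_mul β
  have h2 : Tendsto (fun s : ℝ => α * ∫ t in Ioi s, ff κ t) atTop (nhds 0) := by
    apply squeeze_zero' (g := fun s : ℝ => α * s⁻¹)
    · filter_upwards [eventually_gt_atTop (0:ℝ)] with s hs
      exact mul_nonneg hα0 (I_nonneg κ hs)
    · filter_upwards [eventually_gt_atTop (0:ℝ)] with s hs
      exact mul_le_mul_of_nonneg_left (I_le κ hs) hα0
    · simpa using tendsto_inv_atTop_zero.const_mul α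
  have := h1.sub h2
  simp only [sub_zero] at this
  exact Tendsto.congr (fun s => (hqf s).symm) this

lemma q_to_top (κ β α : ℝ) (hκ : 0 < κ) (hβ : 0 < β) (hβα : β < α) (q : ℝ → ℝ)
    (hq : ∀ s, q s = β / s - α * ∫ t in Set.Ioi s, t ^ (κ - 2) / (1 + t ^ κ)) :
    Filter.Tendsto q (nhdsWithin 0 (Set.Ioi 0)) Filter.atTop := by
  have hqf : ∀ s, q s = β / s - α * ∫ t in Set.Ioi s, ff κ t := hq
  have hαβ : (0:ℝ) < α - β := by linarith
  have hc0 : (0:ℝ) < β / (2 * (α - β)) := by positivity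
  set s₀ : ℝ := (β / (2 * (α - β))) ^ (1/κ) with hs₀def
  have hs₀ : 0 < s₀ := Real.rpow_pos_of_pos hc0 _
  have hS : s₀ ^ κ = β / (2 * (α - β)) := m_rpow κ hκ hc0.le
  set S : ℝ := s₀ ^ κ with hSdef
  have hSpos : 0 < S := Real.rpow_pos_of_pos hs₀ _
  set c : ℝ := S / (1 + S) with hcdef
  have h1S : (0:ℝ) < 1 + S := by linarith
  have hc : 0 < c := div_pos hSpos h1S
  have hαc : α * c < β := by
    have hhalf : (α - β) * S = β / 2 := by rw [hS]; field_simp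
    rw [hcdef, ← mul_div_assoc, div_lt_iff₀ h1S]
    nlinarith
  set I0 : ℝ := ∫ t in Ioi s₀, ff κ t with hI0
  have key : ∀ s ∈ Ioo (0:ℝ) s₀, (β - α * c) * s⁻¹ + (-(α * I0)) ≤ q s := by
    intro s hs
    obtain ⟨hs0, hss0⟩ := hs
    have hsplit : (∫ t in Ioi s, ff κ t) = (∫ t in s..s₀, ff κ t) + I0 := split_int κ hs0 hs₀
    have hle : (∫ t in s..s₀, ff κ t) ≤ c * (s⁻¹ - s₀⁻¹) := by
      rw [intervalIntegral.integral_of_le hss0.le]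
      have hmono : (∫ t in Ioc s s₀, ff κ t) ≤ ∫ t in Ioc s s₀, c * t ^ (-2:ℝ) := by
        apply setIntegral_mono_on ((f_integrableOn κ hs0).mono_set Ioc_subset_Ioi_self)
          (((integrableOn_Ioi_rpow_of_lt (show (-2:ℝ) < -1 by norm_num) hs0).mono_set
            Ioc_subset_Ioi_self).const_mul c) measurableSet_Ioc
        intro t ht
        have ht0 : 0 < t := hs0.trans ht.1
        have hT : t ^ κ ≤ S := Real.rpow_le_rpow ht0.le ht.2 hκ.le
        have hTpos : 0 < t ^ κ := Real.rpow_pos_of_pos ht0 _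
        have h1T : (0:ℝ) < 1 + t ^ κ := by linarith
        have hsplit2 : t ^ (κ-2) = t ^ κ * t ^ (-2:ℝ) := by
          rw [← Real.rpow_add ht0]; ring_nf
        have hfrac : t ^ κ / (1 + t ^ κ) ≤ c := by
          rw [hcdef, div_le_div_iff₀ h1T h1S]; nlinarith
        have ht2 : (0:ℝ) ≤ t ^ (-2:ℝ) := Real.rpow_nonneg ht0.le _
        calc ff κ t = (t ^ κ / (1 + t ^ κ)) * t ^ (-2:ℝ) := by
              rw [ff, hsplit2]; ring
          _ ≤ c * t ^ (-2:ℝ) := mul_le_mul_of_nonneg_right hfrac ht2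
      have hcomp : (∫ t in Ioc s s₀, c * t ^ (-2:ℝ)) = c * (s⁻¹ - s₀⁻¹) := by
        rw [← intervalIntegral.integral_of_le hss0.le, intervalIntegral.integral_const_mul,
          integral_rpow (Or.inr ⟨by norm_num, fun h => absurd h.1 (not_le.mpr (lt_inf_iff.mpr ⟨hs0, hs₀⟩))⟩)]
        rw [show (-2:ℝ)+1 = -1 by norm_num, Real.rpow_neg_one, Real.rpow_neg_one]
        ring
      linarith
    have hI0' : 0 ≤ I0 := I_nonneg κ hs₀
    have hs0inv : (0:ℝ) < s⁻¹ := inv_pos.mpr hs0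
    have hs₀inv : (0:ℝ) ≤ s₀⁻¹ := (inv_pos.mpr hs₀).le
    rw [hqf s, hsplit, div_eq_mul_inv]
    have hα : (0:ℝ) < α := hβ.trans hβα
    nlinarith [mul_le_mul_of_nonneg_left hle hα.le, mul_nonneg (mul_nonneg hα.le hc.le) hs₀inv]
  have hten : Tendsto (fun s : ℝ => (β - α * c) * s⁻¹ + (-(α * I0))) (nhdsWithin 0 (Ioi 0)) atTop :=
    tendsto_atTop_add_const_right _ _ (tendsto_inv_nhdsGT_zero.const_mul_atTop (by linarith))
  apply tendsto_atTop_mono' _ _ hten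
  filter_upwards [Ioo_mem_nhdsGT_of_mem (show (0:ℝ) ∈ Ico 0 s₀ from ⟨le_refl 0, hs₀⟩)] with s hs
  exact key s hs

/-- For κ > 0 and 0 < β < α ≤ 1, with
`q s = β/s − α·∫_s^∞ t^(κ−2)/(1+t^κ) dt`, the function `q` is strictly
decreasing on `(0,(β/(α−β))^(1/κ)]` and strictly increasing on
`[(β/(α−β))^(1/κ),∞)`, tends to `+∞` as `s → 0⁺` and to `0` as `s → ∞`;
consequently `q s = 0` has exactly one solution `s*` in `(0,∞)`, and any such
solution satisfies `(s*)^κ < β/(α−β)`. -/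
theorem stmt3 (κ β α : ℝ) (hκ : 0 < κ) (hβ : 0 < β) (hβα : β < α) (hα : α ≤ 1)
    (q : ℝ → ℝ)
    (hq : ∀ s, q s = β / s - α * ∫ t in Set.Ioi s, t ^ (κ - 2) / (1 + t ^ κ)) :
    StrictAntiOn q (Set.Ioc (0:ℝ) ((β / (α - β)) ^ (1/κ))) ∧
    StrictMonoOn q (Set.Ici ((β / (α - β)) ^ (1/κ))) ∧
    Filter.Tendsto q (nhdsWithin 0 (Set.Ioi 0)) Filter.atTop ∧
    Filter.Tendsto q Filter.atTop (nhds 0) ∧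
    (∃! s, s ∈ Set.Ioi (0:ℝ) ∧ q s = 0) ∧
    (∀ s ∈ Set.Ioi (0:ℝ), q s = 0 → s ^ κ < β / (α - β)) := by
  have hαβ : (0:ℝ) < α - β := by linarith
  have hcpos : (0:ℝ) < β / (α - β) := by positivity
  set m : ℝ := (β / (α - β)) ^ (1/κ) with hmdef
  have hm : 0 < m := Real.rpow_pos_of_pos hcpos _
  have anti : StrictAntiOn q (Set.Ioc (0:ℝ) m) := q_anti κ β α hκ hβ hβα q hq
  have mono : StrictMonoOn q (Set.Ici m) := q_mono κ β α hκ hβ hβα q hq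
  have totop : Filter.Tendsto q (nhdsWithin 0 (Set.Ioi 0)) Filter.atTop :=
    q_to_top κ β α hκ hβ hβα q hq
  have tozero : Filter.Tendsto q Filter.atTop (nhds 0) :=
    q_to_zero κ β α q (by linarith) hq
  -- q is negative on [m, ∞)
  have hneg : ∀ x, m ≤ x → q x < 0 := by
    intro x hx
    have hy : q x < q (x + 1) := mono hx (by linarith : m ≤ x + 1) (by linarith)
    have hy0 : q (x + 1) ≤ 0 := by
      apply ge_of_tendsto tozero
      filter_upwards [eventually_ge_atTop (x + 1)] with z hz
      rcases eq_or_lt_of_le hz with h | h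
      · rw [← h]
      · exact (mono (by linarith : m ≤ x + 1) (by linarith : m ≤ z) h).le
    linarith
  -- existence of a zero
  obtain ⟨ε, hε1, hε2⟩ := ((totop.eventually_ge_atTop 1).and
    (Ioo_mem_nhdsGT_of_mem (show (0:ℝ) ∈ Ico 0 m from ⟨le_refl 0, hm⟩))).exists
  have hqm : q m < 0 := hneg m le_rfl
  have hcont : ContinuousOn q (Icc ε m) :=
    q_contOn κ β α q hq (fun x hx => lt_of_lt_of_le hε2.1 hx.1)
  have hsub : Icc (q m) (q ε) ⊆ q '' Icc ε m := intermediate_value_Icc' hε2.2.le hcont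
  obtain ⟨x, hxmem, hqx⟩ := hsub (show (0:ℝ) ∈ Icc (q m) (q ε) from ⟨hqm.le, by linarith⟩)
  have hx0 : 0 < x := lt_of_lt_of_le hε2.1 hxmem.1
  -- every zero lies in Ioc 0 m
  have hzero_mem : ∀ s, 0 < s → q s = 0 → s ∈ Ioo 0 m := by
    intro s hs hqs
    refine ⟨hs, ?_⟩
    by_contra h
    exact absurd hqs (ne_of_lt (hneg s (not_lt.mp h)))
  refine ⟨anti, mono, totop, tozero, ?_, ?_⟩
  · refine ⟨x, ⟨hx0, hqx⟩, ?_⟩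
    rintro y ⟨hy0, hqy⟩
    have hxm := hzero_mem x hx0 hqx
    have hym := hzero_mem y hy0 hqy
    exact anti.injOn ⟨hym.1, hym.2.le⟩ ⟨hxm.1, hxm.2.le⟩ (by rw [hqy, hqx])
  · intro s hs hqs
    have hsm := hzero_mem s hs hqs
    have := Real.rpow_lt_rpow (le_of_lt hs) hsm.2 hκ
    rwa [m_rpow κ hκ hcpos.le] at this
end

section
/- Fix constants κ>0 and β∈(0,1). The function s ↦ h_κ(s) − q_κ(s,1) is strictly increasing on (0,1], and its value at s=1 equals −∫_1^∞ 1/(t²·(1+t^κ)) dt, which is negative. Consequently, h_κ(s) < q_κ(s,1) for every s∈(0,1]. -/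
open Set Filter MeasureTheory

lemma aux_cont (κ : ℝ) : ContinuousOn (fun t : ℝ => t ^ (κ - 2) / (1 + t ^ κ)) (Set.Ioi 0) := by
  intro t ht
  have ht' : (0:ℝ) < t := ht
  have h1 : ContinuousAt (fun t : ℝ => t ^ (κ - 2)) t :=
    Real.continuousAt_rpow_const t _ (Or.inl ht'.ne')
  have h2 : ContinuousAt (fun t : ℝ => 1 + t ^ κ) t :=
    continuousAt_const.add (Real.continuousAt_rpow_const t _ (Or.inl ht'.ne'))
  have hne : (1:ℝ) + t ^ κ ≠ 0 := by positivity
  exact (h1.div h2 hne).continuousWithinAt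

lemma aux_le (κ : ℝ) {t : ℝ} (ht : 0 < t) :
    t ^ (κ - 2) / (1 + t ^ κ) ≤ t ^ (-2 : ℝ) := by
  have h1 : t ^ (κ - 2) / (1 + t ^ κ) ≤ t ^ (κ - 2) / t ^ κ := by
    have hp := Real.rpow_pos_of_pos ht κ
    apply div_le_div_of_nonneg_left (by positivity) hp (by linarith)
  calc t ^ (κ - 2) / (1 + t ^ κ) ≤ t ^ (κ - 2) / t ^ κ := h1
    _ = t ^ (κ - 2 - κ) := (Real.rpow_sub ht _ _).symm
    _ = t ^ (-2 : ℝ) := by norm_num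

lemma aux_int (κ : ℝ) {s : ℝ} (hs : 0 < s) :
    IntegrableOn (fun t : ℝ => t ^ (κ - 2) / (1 + t ^ κ)) (Set.Ioi s) := by
  apply (integrableOn_Ioi_rpow_of_lt (by norm_num : (-2:ℝ) < -1) hs).mono' 
  · exact ((aux_cont κ).mono (Ioi_subset_Ioi hs.le)).aestronglyMeasurable measurableSet_Ioi
  · filter_upwards [ae_restrict_mem measurableSet_Ioi] with t ht
    have ht' : 0 < t := hs.trans ht
    rw [Real.norm_eq_abs, abs_of_nonneg (by positivity)]
    exact aux_le κ ht'

lemma aux_contg (κ : ℝ) : ContinuousOn (fun t : ℝ => t ^ (κ - 2)) (Set.Ioi 0) :=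
  fun t ht => (Real.continuousAt_rpow_const t _ (Or.inl (ne_of_gt ht))).continuousWithinAt

lemma aux_contr (κ : ℝ) : ContinuousOn (fun t : ℝ => 1 / (t ^ 2 * (1 + t ^ κ))) (Set.Ioi 0) := by
  intro t ht
  have ht' : (0:ℝ) < t := ht
  have h2 : ContinuousAt (fun t : ℝ => t ^ 2 * (1 + t ^ κ)) t := by
    exact (continuousAt_pow t 2).mul
      (continuousAt_const.add (Real.continuousAt_rpow_const t _ (Or.inl ht'.ne')))
  have hne : t ^ 2 * (1 + t ^ κ) ≠ 0 := by positivity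
  exact (continuousAt_const.div h2 hne).continuousWithinAt

lemma aux_intr (κ : ℝ) (hκ : 0 < κ) :
    IntegrableOn (fun t : ℝ => 1 / (t ^ 2 * (1 + t ^ κ))) (Set.Ioi 1) := by
  apply (integrableOn_Ioi_rpow_of_lt (by norm_num : (-2:ℝ) < -1) one_pos).mono'
  · exact ((aux_contr κ).mono (Ioi_subset_Ioi zero_le_one)).aestronglyMeasurable measurableSet_Ioi
  · filter_upwards [ae_restrict_mem measurableSet_Ioi] with t ht
    have ht' : (0:ℝ) < t := lt_trans one_pos ht
    rw [Real.norm_eq_abs, abs_of_nonneg (by positivity)]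
    have : t ^ (-2:ℝ) = 1 / t ^ 2 := by
      rw [show (-2:ℝ) = -((2:ℕ):ℝ) by norm_num, Real.rpow_neg ht'.le, Real.rpow_natCast,
        one_div]
    rw [this]
    have h1 : (0:ℝ) < t ^ 2 := by positivity
    have h2 : (0:ℝ) < 1 + t ^ κ := by positivity
    rw [div_le_div_iff₀ (by positivity) h1]
    nlinarith [Real.rpow_nonneg ht'.le κ]

lemma aux_sum (κ : ℝ) {t : ℝ} (ht : 0 < t) :
    t ^ (κ - 2) / (1 + t ^ κ) + 1 / (t ^ 2 * (1 + t ^ κ)) = t ^ (-2:ℝ) := by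
  have h2 : t ^ (κ - 2) = t ^ κ / t ^ 2 := by
    rw [Real.rpow_sub ht]
    congr 1
    rw [show (2:ℝ) = ((2:ℕ):ℝ) by norm_num, Real.rpow_natCast]
  have h3 : t ^ (-2:ℝ) = 1 / t ^ 2 := by
    rw [show (-2:ℝ) = -((2:ℕ):ℝ) by norm_num, Real.rpow_neg ht.le, Real.rpow_natCast, one_div]
  have hp1 : (0:ℝ) < t ^ 2 := by positivity
  have hp2 : (0:ℝ) < 1 + t ^ κ := by positivity
  rw [h2, h3]
  field_simp
  ring

/-- For κ > 0 and β ∈ (0,1), with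
`h s = β/s − ∫_s^1 t^{κ−2} dt − 1` and `q s = β/s − ∫_s^∞ t^{κ−2}/(1+t^κ) dt`,
the function `s ↦ h s − q s` is strictly increasing on `(0,1]`, its value at
`s = 1` equals `−∫_1^∞ 1/(t²(1+t^κ)) dt`, which is negative; consequently
`h s < q s` for every `s ∈ (0,1]`. -/
theorem stmt7 (κ β : ℝ) (hκ : 0 < κ) (hβ : β ∈ Set.Ioo (0:ℝ) 1)
    (h q : ℝ → ℝ)
    (hh : ∀ s, h s = β / s - (∫ t in s..(1:ℝ), t ^ (κ - 2)) - 1)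
    (hq : ∀ s, q s = β / s - ∫ t in Set.Ioi s, t ^ (κ - 2) / (1 + t ^ κ)) :
    StrictMonoOn (fun s => h s - q s) (Set.Ioc (0:ℝ) 1) ∧
    h 1 - q 1 = -∫ t in Set.Ioi (1:ℝ), 1 / (t ^ 2 * (1 + t ^ κ)) ∧
    h 1 - q 1 < 0 ∧
    ∀ s ∈ Set.Ioc (0:ℝ) 1, h s < q s := by
  have hF : ∀ s : ℝ, h s - q s =
      (∫ t in Set.Ioi s, t ^ (κ - 2) / (1 + t ^ κ)) - (∫ t in s..(1:ℝ), t ^ (κ - 2)) - 1 := by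
    intro s; rw [hh, hq]; ring
  -- strict monotonicity
  have hmono : StrictMonoOn (fun s => h s - q s) (Set.Ioc (0:ℝ) 1) := by
    intro s₁ hs₁ s₂ hs₂ hlt
    simp only
    rw [hF, hF]
    have hs₁0 : 0 < s₁ := hs₁.1
    have hs₂0 : 0 < s₂ := hs₂.1
    have hIcc : Set.uIcc s₁ s₂ ⊆ Set.Ioi 0 := by
      rw [Set.uIcc_of_le hlt.le]
      exact fun x hx => lt_of_lt_of_le hs₁0 hx.1
    have hIcc1 : Set.uIcc s₁ (1:ℝ) ⊆ Set.Ioi 0 := by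
      rw [Set.uIcc_of_le hs₁.2]
      exact fun x hx => lt_of_lt_of_le hs₁0 hx.1
    have hIcc2 : Set.uIcc s₂ (1:ℝ) ⊆ Set.Ioi 0 := by
      rw [Set.uIcc_of_le hs₂.2]
      exact fun x hx => lt_of_lt_of_le hs₂0 hx.1
    have hif : IntervalIntegrable (fun t : ℝ => t ^ (κ - 2) / (1 + t ^ κ)) volume s₁ s₂ :=
      ((aux_cont κ).mono hIcc).intervalIntegrable
    have hig : IntervalIntegrable (fun t : ℝ => t ^ (κ - 2)) volume s₁ s₂ :=
      ((aux_contg κ).mono hIcc).intervalIntegrable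
    have hig2 : IntervalIntegrable (fun t : ℝ => t ^ (κ - 2)) volume s₂ 1 :=
      ((aux_contg κ).mono hIcc2).intervalIntegrable
    -- split the Ioi integral
    have hsplit : (∫ t in Set.Ioi s₁, t ^ (κ - 2) / (1 + t ^ κ)) =
        (∫ t in s₁..s₂, t ^ (κ - 2) / (1 + t ^ κ)) +
          ∫ t in Set.Ioi s₂, t ^ (κ - 2) / (1 + t ^ κ) := by
      rw [intervalIntegral.integral_of_le hlt.le,
        ← setIntegral_union (Set.Ioc_disjoint_Ioi le_rfl) measurableSet_Ioi
          ((aux_int κ hs₁0).mono_set Set.Ioc_subset_Ioi_self) (aux_int κ hs₂0),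
        Set.Ioc_union_Ioi_eq_Ioi hlt.le]
    have hsplitg : (∫ t in s₁..(1:ℝ), t ^ (κ - 2)) =
        (∫ t in s₁..s₂, t ^ (κ - 2)) + ∫ t in s₂..(1:ℝ), t ^ (κ - 2) :=
      (intervalIntegral.integral_add_adjacent_intervals hig hig2).symm
    rw [hsplit, hsplitg]
    have hpos : 0 < ∫ t in s₁..s₂, (t ^ (κ - 2) - t ^ (κ - 2) / (1 + t ^ κ)) := by
      apply intervalIntegral.intervalIntegral_pos_of_pos_on (hig.sub hif) _ hlt
      intro x hx
      have hx0 : 0 < x := lt_trans hs₁0 hx.1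
      have hxk : 0 < x ^ κ := Real.rpow_pos_of_pos hx0 κ
      have hnum : 0 < x ^ (κ - 2) := Real.rpow_pos_of_pos hx0 _
      have : x ^ (κ - 2) / (1 + x ^ κ) < x ^ (κ - 2) := by
        rw [div_lt_iff₀ (by positivity)]
        nlinarith
      linarith
    rw [intervalIntegral.integral_sub hig hif] at hpos
    linarith
  have hval : h 1 - q 1 = -∫ t in Set.Ioi (1:ℝ), 1 / (t ^ 2 * (1 + t ^ κ)) := by
    rw [hF 1, intervalIntegral.integral_same, sub_zero]
    have key : (∫ t in Set.Ioi (1:ℝ), t ^ (κ - 2) / (1 + t ^ κ)) +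
        (∫ t in Set.Ioi (1:ℝ), 1 / (t ^ 2 * (1 + t ^ κ))) = 1 := by
      rw [← integral_add (aux_int κ one_pos) (aux_intr κ hκ)]
      have heq : ∫ t in Set.Ioi (1:ℝ),
          (t ^ (κ - 2) / (1 + t ^ κ) + 1 / (t ^ 2 * (1 + t ^ κ))) =
          ∫ t in Set.Ioi (1:ℝ), t ^ (-2:ℝ) := by
        apply setIntegral_congr_fun measurableSet_Ioi
        intro t ht
        exact aux_sum κ (lt_trans one_pos ht)
      rw [heq, integral_Ioi_rpow_of_lt (by norm_num : (-2:ℝ) < -1) one_pos]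
      norm_num
    linarith
  have hrpos : 0 < ∫ t in Set.Ioi (1:ℝ), 1 / (t ^ 2 * (1 + t ^ κ)) := by
    have hsub : (∫ t in Set.Ioc (1:ℝ) 2, 1 / (t ^ 2 * (1 + t ^ κ))) ≤
        ∫ t in Set.Ioi (1:ℝ), 1 / (t ^ 2 * (1 + t ^ κ)) := by
      apply setIntegral_mono_set (aux_intr κ hκ)
      · filter_upwards [ae_restrict_mem measurableSet_Ioi] with t ht
        have ht' : (0:ℝ) < t := lt_trans one_pos ht
        positivity
      · exact HasSubset.Subset.eventuallyLE Set.Ioc_subset_Ioi_self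
    have h2 : 0 < ∫ t in Set.Ioc (1:ℝ) 2, 1 / (t ^ 2 * (1 + t ^ κ)) := by
      rw [← intervalIntegral.integral_of_le one_le_two]
      apply intervalIntegral.intervalIntegral_pos_of_pos_on
      · apply ContinuousOn.intervalIntegrable
        apply (aux_contr κ).mono
        rw [Set.uIcc_of_le one_le_two]
        exact fun x hx => lt_of_lt_of_le one_pos hx.1
      · intro x hx
        have hx' : (0:ℝ) < x := lt_trans one_pos hx.1
        positivity
      · norm_num
    linarith
  have hneg : h 1 - q 1 < 0 := by rw [hval]; linarith
  refine ⟨hmono, hval, hneg, ?_⟩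
  intro s hs
  rcases eq_or_lt_of_le hs.2 with hcase | hcase
  · subst hcase; linarith
  · have := hmono hs ⟨one_pos, le_rfl⟩ hcase
    simp only at this
    linarith
end

section
/- Fix constants κ>0 and β∈(0,1). Let α* be the unique solution in (0,β) of h_κ(α)=0, and let s* be the unique solution in (0,∞) of q_κ(s,1)=0. Then α* < s*, and consequently β/(s*)^κ < β/(α*)^κ; that is, the limiting risk of the minimum-norm interpolator using all components (which equals N^{1−κ}·β/(s*)^κ) is strictly smaller than the minimum limiting risk over the underparameterized regime (which equals N^{1−κ}·β/(α*)^κ). -/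
/-!
Evaluate `q` at `α*`. Since `h α* = 0`, `β / α* = ∫_{α*}^1 t^(κ-2) dt + 1`, while the integrand
`t^(κ-2) / (1 + t^κ)` of `q` is at most `t^(κ-2)` on `[α*, 1]` and strictly below `t^(-2)`, whose
integral over `(1, ∞)` is `1`. Hence `q α* > 0`. For large `s` the integrand is at least
`c t^(-2)` with `β < c < 1`, so `q s < 0`. By continuity `q` vanishes somewhere in `(α*, ∞)`, and
that zero is `s*`.
-/

open Set Filter MeasureTheory

theorem setIntegral_lt_setIntegral_of_forall_lt {X : Type*} [MeasurableSpace X] {μ : Measure X}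
    {s : Set X} {f g : X → ℝ} (hs : MeasurableSet s) (hμs : μ s ≠ 0)
    (hf : IntegrableOn f s μ) (hg : IntegrableOn g s μ) (hlt : ∀ x ∈ s, f x < g x) :
    ∫ x in s, f x ∂μ < ∫ x in s, g x ∂μ := by
  rw [← sub_pos, ← integral_sub hg hf]
  refine (setIntegral_pos_iff_support_of_nonneg_ae (f := g - f) ?_ (hg.sub hf)).mpr ?_
  · filter_upwards [ae_restrict_mem hs] with x hx
    exact (sub_pos.mpr (hlt x hx)).le
  · refine (pos_iff_ne_zero.mpr hμs).trans_le (measure_mono fun x hx => ⟨?_, hx⟩)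
    exact (sub_pos.mpr (hlt x hx)).ne'

theorem continuousOn_integral_Ioi {E : Type*} [NormedAddCommGroup E] [NormedSpace ℝ E]
    {f : ℝ → E} {a b : ℝ} (hf : IntegrableOn f (Ioi a)) :
    ContinuousOn (fun s => ∫ t in Ioi s, f t) (Icc a b) := by
  rcases le_or_gt a b with hab | hba
  · have hab' : IntervalIntegrable f volume a b :=
      (intervalIntegrable_iff_integrableOn_Ioc_of_le hab).mpr (hf.mono_set Ioc_subset_Ioi_self)
    have hprim := intervalIntegral.continuousOn_primitive_interval' hab' left_mem_uIcc
    rw [uIcc_of_le hab] at hprim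
    refine ((continuousOn_const (c := ∫ t in Ioi a, f t)).sub hprim).congr fun s hs => ?_
    simp only [Pi.sub_apply, ← intervalIntegral.integral_Ioi_sub_Ioi hf hs.1, sub_sub_cancel]
  · rw [Icc_eq_empty_of_lt hba]
    exact continuousOn_empty _

section Integrand

variable {κ : ℝ}

theorem rpow_sub_two_div_one_add_rpow_le {t : ℝ} (ht : 0 < t) :
    t ^ (κ - 2) / (1 + t ^ κ) ≤ t ^ (κ - 2) :=
  div_le_self (Real.rpow_nonneg ht.le _) (le_add_of_nonneg_right (Real.rpow_nonneg ht.le _))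

theorem rpow_sub_two_div_one_add_rpow_eq {t : ℝ} (ht : 0 < t) :
    t ^ (κ - 2) / (1 + t ^ κ) = t ^ κ / (1 + t ^ κ) * t ^ (-2 : ℝ) := by
  rw [Real.rpow_sub ht, Real.rpow_neg ht.le]
  ring

theorem rpow_div_one_add_rpow_lt_one {t : ℝ} (ht : 0 < t) : t ^ κ / (1 + t ^ κ) < 1 := by
  have := Real.rpow_pos_of_pos ht κ
  rw [div_lt_one (by positivity)]
  linarith

theorem rpow_sub_two_div_one_add_rpow_lt_rpow_neg_two {t : ℝ} (ht : 0 < t) :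
    t ^ (κ - 2) / (1 + t ^ κ) < t ^ (-2 : ℝ) := by
  rw [rpow_sub_two_div_one_add_rpow_eq ht]
  exact mul_lt_of_lt_one_left (Real.rpow_pos_of_pos ht _) (rpow_div_one_add_rpow_lt_one ht)

theorem continuousOn_rpow_sub_two_div_one_add_rpow :
    ContinuousOn (fun t : ℝ => t ^ (κ - 2) / (1 + t ^ κ)) (Ioi 0) := by
  have hrpow (p : ℝ) : ContinuousOn (fun t : ℝ => t ^ p) (Ioi 0) :=
    continuousOn_id.rpow_const fun t ht => Or.inl (ne_of_gt ht)
  refine (hrpow _).div (continuousOn_const.add (hrpow κ)) fun t ht => ?_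
  exact (add_pos_of_pos_of_nonneg one_pos (Real.rpow_nonneg (le_of_lt ht) κ)).ne'

theorem integrableOn_Ioi_rpow_sub_two_div_one_add_rpow {a : ℝ} (ha : 0 < a) :
    IntegrableOn (fun t : ℝ => t ^ (κ - 2) / (1 + t ^ κ)) (Ioi a) := by
  refine (integrableOn_Ioi_rpow_of_lt (by norm_num : (-2 : ℝ) < -1) ha).mono' ?_ ?_
  · exact (continuousOn_rpow_sub_two_div_one_add_rpow.mono (Ioi_subset_Ioi ha.le)).aestronglyMeasurable
      measurableSet_Ioi
  · filter_upwards [ae_restrict_mem measurableSet_Ioi] with t ht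
    have ht0 : 0 < t := ha.trans ht
    rw [Real.norm_of_nonneg (div_nonneg (Real.rpow_nonneg ht0.le _)
      (add_nonneg zero_le_one (Real.rpow_nonneg ht0.le _)))]
    exact (rpow_sub_two_div_one_add_rpow_lt_rpow_neg_two ht0).le

theorem integral_Ioi_one_rpow_sub_two_div_one_add_rpow_lt_one :
    ∫ t in Ioi (1 : ℝ), t ^ (κ - 2) / (1 + t ^ κ) < 1 := by
  calc ∫ t in Ioi (1 : ℝ), t ^ (κ - 2) / (1 + t ^ κ)
      < ∫ t in Ioi (1 : ℝ), t ^ (-2 : ℝ) :=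
        setIntegral_lt_setIntegral_of_forall_lt measurableSet_Ioi (by simp)
          (integrableOn_Ioi_rpow_sub_two_div_one_add_rpow one_pos)
          (integrableOn_Ioi_rpow_of_lt (by norm_num) one_pos)
          fun t ht => rpow_sub_two_div_one_add_rpow_lt_rpow_neg_two (one_pos.trans ht)
    _ = 1 := by rw [integral_Ioi_rpow_of_lt (by norm_num) one_pos]; norm_num

theorem integral_Ioi_rpow_sub_two_div_one_add_rpow_lt {α : ℝ} (hα0 : 0 < α) (hα1 : α ≤ 1) :
    ∫ t in Ioi α, t ^ (κ - 2) / (1 + t ^ κ) < (∫ t in α..1, t ^ (κ - 2)) + 1 := by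
  have hcont : ContinuousOn (fun t : ℝ => t ^ (κ - 2)) (Icc α 1) :=
    continuousOn_id.rpow_const fun t ht => Or.inl (hα0.trans_le ht.1).ne'
  have hcont' : ContinuousOn (fun t : ℝ => t ^ (κ - 2) / (1 + t ^ κ)) (Icc α 1) :=
    continuousOn_rpow_sub_two_div_one_add_rpow.mono fun t ht => hα0.trans_le ht.1
  have hle : ∫ t in α..1, t ^ (κ - 2) / (1 + t ^ κ) ≤ ∫ t in α..1, t ^ (κ - 2) :=
    intervalIntegral.integral_mono_on hα1 (hcont'.intervalIntegrable_of_Icc hα1)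
      (hcont.intervalIntegrable_of_Icc hα1)
      fun t ht => rpow_sub_two_div_one_add_rpow_le (hα0.trans_le ht.1)
  rw [← intervalIntegral.integral_interval_add_Ioi
    (integrableOn_Ioi_rpow_sub_two_div_one_add_rpow hα0)
    (integrableOn_Ioi_rpow_sub_two_div_one_add_rpow one_pos)]
  linarith [integral_Ioi_one_rpow_sub_two_div_one_add_rpow_lt_one (κ := κ)]

theorem exists_div_lt_integral_Ioi_rpow_sub_two_div_one_add_rpow (hκ : 0 < κ) {β : ℝ}
    (hβ : β < 1) (a : ℝ) :
    ∃ s, a < s ∧ β / s < ∫ t in Ioi s, t ^ (κ - 2) / (1 + t ^ κ) := by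
  obtain ⟨s, hsκ, has⟩ := (((tendsto_rpow_atTop hκ).eventually_gt_atTop (β / (1 - β))).and
    (eventually_gt_atTop (max a 0))).exists
  have hs : 0 < s := (le_max_right a 0).trans_lt has
  set c := s ^ κ / (1 + s ^ κ)
  have hβc : β < c := by
    rw [div_lt_iff₀ (by linarith)] at hsκ
    rw [lt_div_iff₀ (by positivity)]
    linarith
  have hlow : ∫ t in Ioi s, c * t ^ (-2 : ℝ) ≤ ∫ t in Ioi s, t ^ (κ - 2) / (1 + t ^ κ) := by
    refine setIntegral_mono_on ((integrableOn_Ioi_rpow_of_lt (by norm_num) hs).const_mul c)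
      (integrableOn_Ioi_rpow_sub_two_div_one_add_rpow hs) measurableSet_Ioi fun t ht => ?_
    have ht0 : 0 < t := hs.trans ht
    rw [rpow_sub_two_div_one_add_rpow_eq ht0]
    refine mul_le_mul_of_nonneg_right ?_ (Real.rpow_nonneg ht0.le _)
    have hst : s ^ κ ≤ t ^ κ := Real.rpow_le_rpow hs.le (le_of_lt ht) hκ.le
    rw [div_le_div_iff₀ (by positivity) (by positivity)]
    linarith
  have hval : ∫ t in Ioi s, c * t ^ (-2 : ℝ) = c / s := by
    rw [integral_const_mul, integral_Ioi_rpow_of_lt (by norm_num) hs]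
    norm_num [Real.rpow_neg_one, div_eq_mul_inv]
  refine ⟨s, (le_max_left a 0).trans_lt has, ?_⟩
  calc β / s < c / s := div_lt_div_of_pos_right hβc hs
    _ ≤ _ := hval ▸ hlow

end Integrand

theorem stmt8_general (κ β : ℝ) (hκ : 0 < κ) (hβ : β ∈ Set.Ioo (0:ℝ) 1)
    (h q : ℝ → ℝ)
    (hh : ∀ α, h α = β / α - (∫ t in α..(1:ℝ), t ^ (κ - 2)) - 1)
    (hq : ∀ s, q s = β / s - ∫ t in Set.Ioi s, t ^ (κ - 2) / (1 + t ^ κ))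
    (αs : ℝ) (hαs : αs ∈ Set.Ioo (0:ℝ) β) (hαz : h αs = 0)
    (ss : ℝ)
    (hsu : ∀ s ∈ Set.Ioi (0:ℝ), q s = 0 → s = ss) :
    αs < ss ∧ β / ss ^ κ < β / αs ^ κ ∧
    ∀ N : ℝ, 0 < N →
      N ^ (1 - κ) * β / ss ^ κ < N ^ (1 - κ) * β / αs ^ κ := by
  obtain ⟨hβ0, hβ1⟩ := hβ
  obtain ⟨hα0, hαβ⟩ := hαs
  have hqα : 0 < q αs := by
    have := integral_Ioi_rpow_sub_two_div_one_add_rpow_lt (κ := κ) hα0 (hαβ.trans hβ1).le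
    rw [hh, sub_sub, sub_eq_zero] at hαz
    rw [hq]
    linarith
  obtain ⟨s₀, hαs₀, hqs₀⟩ : ∃ s₀, αs < s₀ ∧ q s₀ < 0 := by
    obtain ⟨s₀, hαs₀, hs₀⟩ := exists_div_lt_integral_Ioi_rpow_sub_two_div_one_add_rpow hκ hβ1 αs
    exact ⟨s₀, hαs₀, by rw [hq]; linarith⟩
  have hq_cont : ContinuousOn q (Icc αs s₀) :=
    ((continuousOn_const.div continuousOn_id fun s hs => (hα0.trans_le hs.1).ne').sub
      (continuousOn_integral_Ioi (integrableOn_Ioi_rpow_sub_two_div_one_add_rpow hα0))).congr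
      fun s _ => hq s
  obtain ⟨x, hx, hqx⟩ := intermediate_value_Icc' hαs₀.le hq_cont ⟨hqs₀.le, hqα.le⟩
  have hαx : αs < x := hx.1.lt_of_ne fun h => hqα.ne' (h ▸ hqx)
  have hαss : αs < ss := hsu x (hα0.trans hαx) hqx ▸ hαx
  have hrisk : β / ss ^ κ < β / αs ^ κ :=
    div_lt_div_of_pos_left hβ0 (Real.rpow_pos_of_pos hα0 κ) (Real.rpow_lt_rpow hα0.le hαss hκ)
  refine ⟨hαss, hrisk, fun N hN => ?_⟩
  rw [mul_div_assoc, mul_div_assoc]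
  exact mul_lt_mul_of_pos_left hrisk (Real.rpow_pos_of_pos hN _)

/-- For κ > 0 and β ∈ (0,1), with
`h α = β/α − ∫_α^1 t^{κ−2} dt − 1` and `q s = β/s − ∫_s^∞ t^{κ−2}/(1+t^κ) dt`,
if `α*` is the unique zero of `h` in `(0,β)` and `s*` the unique zero of `q`
in `(0,∞)`, then `α* < s*` and `β/(s*)^κ < β/(α*)^κ`; i.e. for every `N > 0`
the limiting risk `N^{1−κ}·β/(s*)^κ` of the minimum-norm interpolator using
all components is strictly smaller than the minimum limiting risk
`N^{1−κ}·β/(α*)^κ` over the underparameterized regime. -/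
theorem stmt8 (κ β : ℝ) (hκ : 0 < κ) (hβ : β ∈ Set.Ioo (0:ℝ) 1)
    (h q : ℝ → ℝ)
    (hh : ∀ α, h α = β / α - (∫ t in α..(1:ℝ), t ^ (κ - 2)) - 1)
    (hq : ∀ s, q s = β / s - ∫ t in Set.Ioi s, t ^ (κ - 2) / (1 + t ^ κ))
    (αs : ℝ) (hαs : αs ∈ Set.Ioo (0:ℝ) β) (hαz : h αs = 0)
    (hαu : ∀ α ∈ Set.Ioo (0:ℝ) β, h α = 0 → α = αs)
    (ss : ℝ) (hss : ss ∈ Set.Ioi (0:ℝ)) (hsz : q ss = 0)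
    (hsu : ∀ s ∈ Set.Ioi (0:ℝ), q s = 0 → s = ss) :
    αs < ss ∧ β / ss ^ κ < β / αs ^ κ ∧
    ∀ N : ℝ, 0 < N →
      N ^ (1 - κ) * β / ss ^ κ < N ^ (1 - κ) * β / αs ^ κ :=
  stmt8_general κ β hκ hβ h q hh hq αs hαs hαz ss hsu
end

section
/- Let n be an even positive integer, p > n/2, and γ>1, ν>0, μ>0 real constants. Let X = [X₁ | X₂] ∈ ℝ^{n×p}, where X₁ consists of the first p−n/2 columns and X₂ of the last n/2 columns. Let Σ ∈ ℝ^{p×p} be diagonal with nonnegative entries whose first p−n/2 diagonal entries are all at least ν. Assume that min_{‖v‖=1} (1/n)‖X₂v‖² ≥ 1/25 and max_{‖v‖=1} (1/n)‖X₁v‖² ≤ 9γ². Then the minimum eigenvalue of the symmetric matrix (1/n)XᵀX + μΣ is at least min( μν/(400γ²), (√399/100 − 3/20)² ). -/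
/-! Split `v = (a, b)` along the column blocks, so that
`vᵀ M v = ‖(X₁ a + X₂ b) / √n‖² + μ ∑ dⱼ vⱼ²`. If `‖a‖² ≥ 1 / (400 γ²)`, the diagonal term
alone gives `μ ν ‖a‖² ≥ μ ν / (400 γ²)`. Otherwise `‖X₁ a‖ / √n ≤ 3 γ ‖a‖ < 3 / 20`, while
`‖b‖² > 399 / 400` gives `‖X₂ b‖ / √n ≥ ‖b‖ / 5 ≥ √399 / 100`, and the reverse triangle
inequality bounds `‖X₁ a + X₂ b‖ / √n` below by `√399 / 100 - 3 / 20 ≥ 0`. -/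

open Matrix

section UnitSphere

variable {E F : Type*} [NormedAddCommGroup E] [NormedSpace ℝ E]
  [SeminormedAddCommGroup F] [NormedSpace ℝ F]

theorem LinearMap.norm_apply_eq_norm_mul_norm_apply_normalize (f : E →ₗ[ℝ] F) (x : E) :
    ‖f x‖ = ‖x‖ * ‖f (‖x‖⁻¹ • x)‖ := by
  rcases eq_or_ne x 0 with rfl | hx
  · simp
  · rw [map_smul, norm_smul, norm_inv, norm_norm, ← mul_assoc,
      mul_inv_cancel₀ (norm_ne_zero_iff.2 hx), one_mul]

theorem LinearMap.mul_norm_le_norm_apply_of_unit {f : E →ₗ[ℝ] F} {c : ℝ}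
    (h : ∀ x, ‖x‖ = 1 → c ≤ ‖f x‖) (x : E) : c * ‖x‖ ≤ ‖f x‖ := by
  rcases eq_or_ne x 0 with rfl | hx
  · simp
  · rw [f.norm_apply_eq_norm_mul_norm_apply_normalize, mul_comm]
    exact mul_le_mul_of_nonneg_left (h _ (norm_smul_inv_norm hx)) (norm_nonneg x)

theorem LinearMap.norm_apply_le_mul_norm_of_unit {f : E →ₗ[ℝ] F} {C : ℝ}
    (h : ∀ x, ‖x‖ = 1 → ‖f x‖ ≤ C) (x : E) : ‖f x‖ ≤ C * ‖x‖ := by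
  rcases eq_or_ne x 0 with rfl | hx
  · simp
  · rw [f.norm_apply_eq_norm_mul_norm_apply_normalize, mul_comm C]
    exact mul_le_mul_of_nonneg_left (h _ (norm_smul_inv_norm hx)) (norm_nonneg x)

end UnitSphere

theorem sq_sub_le_norm_add_sq {F : Type*} [SeminormedAddCommGroup F] {A B : F} {α β : ℝ}
    (hA : ‖A‖ ≤ α) (hB : β ≤ ‖B‖) (hαβ : α ≤ β) : (β - α) ^ 2 ≤ ‖A + B‖ ^ 2 := by
  have h := norm_sub_norm_le B (-A)
  rw [norm_neg, sub_neg_eq_add, add_comm] at h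
  have : β - α ≤ ‖A + B‖ := by linarith
  exact pow_le_pow_left₀ (sub_nonneg.2 hαβ) this 2

theorem EuclideanSpace.norm_inv_sqrt_smul_toLp_sq {ι : Type*} [Fintype ι] {c : ℝ} (hc : 0 ≤ c)
    (y : ι → ℝ) : ‖(√c)⁻¹ • WithLp.toLp 2 y‖ ^ 2 = c⁻¹ * ∑ i, y i ^ 2 := by
  rw [norm_smul, mul_pow, EuclideanSpace.real_norm_sq_eq, norm_inv, Real.norm_eq_abs,
    abs_of_nonneg (Real.sqrt_nonneg c), inv_pow, Real.sq_sqrt hc]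

theorem Matrix.norm_inv_sqrt_smul_toLp_mulVec_le_of_unit {m k : Type*} [Fintype m] [Fintype k]
    [DecidableEq k] {c C : ℝ} (hc : 0 ≤ c) (hC : 0 ≤ C) {X : Matrix m k ℝ}
    (h : ∀ v : k → ℝ, ∑ i, v i ^ 2 = 1 → c⁻¹ * ∑ i, (X *ᵥ v) i ^ 2 ≤ C ^ 2) (w : k → ℝ) :
    ‖(√c)⁻¹ • WithLp.toLp 2 (X *ᵥ w)‖ ≤ C * ‖WithLp.toLp 2 w‖ := by
  refine LinearMap.norm_apply_le_mul_norm_of_unit (f := (√c)⁻¹ • toLpLin 2 2 X)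
    (fun u hu => ?_) (WithLp.toLp 2 w)
  refine (pow_le_pow_iff_left₀ (norm_nonneg _) hC two_ne_zero).1 ?_
  rw [LinearMap.smul_apply, toLpLin_apply, EuclideanSpace.norm_inv_sqrt_smul_toLp_sq hc]
  exact h _ (by rw [← EuclideanSpace.real_norm_sq_eq, hu, one_pow])

theorem Matrix.mul_norm_le_norm_inv_sqrt_smul_toLp_mulVec_of_unit {m k : Type*} [Fintype m]
    [Fintype k] [DecidableEq k] {c C : ℝ} (hc : 0 ≤ c) (hC : 0 ≤ C) {X : Matrix m k ℝ}
    (h : ∀ v : k → ℝ, ∑ i, v i ^ 2 = 1 → C ^ 2 ≤ c⁻¹ * ∑ i, (X *ᵥ v) i ^ 2) (w : k → ℝ) :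
    C * ‖WithLp.toLp 2 w‖ ≤ ‖(√c)⁻¹ • WithLp.toLp 2 (X *ᵥ w)‖ := by
  refine LinearMap.mul_norm_le_norm_apply_of_unit (f := (√c)⁻¹ • toLpLin 2 2 X)
    (fun u hu => ?_) (WithLp.toLp 2 w)
  refine (pow_le_pow_iff_left₀ hC (norm_nonneg _) two_ne_zero).1 ?_
  rw [LinearMap.smul_apply, toLpLin_apply, EuclideanSpace.norm_inv_sqrt_smul_toLp_sq hc]
  exact h _ (by rw [← EuclideanSpace.real_norm_sq_eq, hu, one_pow])

theorem Matrix.inv_mul_sum_fromCols_mulVec_sumElim_sq {m k₁ k₂ : Type*} [Fintype m]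
    [Fintype k₁] [Fintype k₂] {c : ℝ} (hc : 0 ≤ c) (X₁ : Matrix m k₁ ℝ) (X₂ : Matrix m k₂ ℝ)
    (a : k₁ → ℝ) (b : k₂ → ℝ) :
    c⁻¹ * ∑ i, (fromCols X₁ X₂ *ᵥ Sum.elim a b) i ^ 2 =
      ‖(√c)⁻¹ • WithLp.toLp 2 (X₁ *ᵥ a) + (√c)⁻¹ • WithLp.toLp 2 (X₂ *ᵥ b)‖ ^ 2 := by
  rw [fromCols_mulVec_sumElim, ← smul_add, ← WithLp.toLp_add,
    EuclideanSpace.norm_inv_sqrt_smul_toLp_sq hc]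

theorem mul_sum_sq_le_sum_mul_sumElim_sq {α β : Type*} [Fintype α] [Fintype β]
    {d : α ⊕ β → ℝ} {ν : ℝ} (hl : ∀ i, ν ≤ d (Sum.inl i)) (hr : ∀ j, 0 ≤ d (Sum.inr j))
    (a : α → ℝ) (b : β → ℝ) : ν * ∑ i, a i ^ 2 ≤ ∑ j, d j * Sum.elim a b j ^ 2 := by
  rw [Finset.mul_sum, Fintype.sum_sum_type]
  have hinl : ∑ i, ν * a i ^ 2 ≤ ∑ i, d (Sum.inl i) * a i ^ 2 :=
    Finset.sum_le_sum fun i _ => mul_le_mul_of_nonneg_right (hl i) (sq_nonneg _)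
  have hinr : 0 ≤ ∑ j, d (Sum.inr j) * b j ^ 2 :=
    Finset.sum_nonneg fun j _ => mul_nonneg (hr j) (sq_nonneg _)
  simpa only [Sum.elim_inl, Sum.elim_inr] using le_add_of_le_of_nonneg hinl hinr

theorem Matrix.dotProduct_mulVec_smul_transpose_mul_add_smul_diagonal {m k : Type*}
    [Fintype m] [Fintype k] [DecidableEq k] (X : Matrix m k ℝ) (d v : k → ℝ) (c μ : ℝ) :
    v ⬝ᵥ ((c • (Xᵀ * X) + μ • diagonal d) *ᵥ v) =
      c * ∑ i, (X *ᵥ v) i ^ 2 + μ * ∑ j, d j * v j ^ 2 := by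
  rw [add_mulVec, smul_mulVec, smul_mulVec, dotProduct_add, dotProduct_smul, dotProduct_smul,
    smul_eq_mul, smul_eq_mul, ← mulVec_mulVec, dotProduct_transpose_mulVec]
  simp only [dotProduct, mulVec_diagonal, sq]
  congr 2
  exact Finset.sum_congr rfl fun j _ => by ring

theorem min_le_norm_add_sq_add_mul_sq {F : Type*} [SeminormedAddCommGroup F] {A B : F}
    {s t γ ν μ : ℝ} (ht : 0 ≤ t) (hst : s ^ 2 + t ^ 2 = 1) (hγ : 1 ≤ γ) (hν : 0 ≤ ν)
    (hμ : 0 ≤ μ) (hA : ‖A‖ ≤ 3 * γ * s) (hB : 1 / 5 * t ≤ ‖B‖) :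
    min (μ * ν / (400 * γ ^ 2)) ((√399 / 100 - 3 / 20) ^ 2) ≤ ‖A + B‖ ^ 2 + μ * ν * s ^ 2 := by
  have hγ0 : 0 < γ := by linarith
  rcases le_or_gt (1 / (400 * γ ^ 2)) (s ^ 2) with hs | hs
  · refine (min_le_left _ _).trans ?_
    have : μ * ν / (400 * γ ^ 2) ≤ μ * ν * s ^ 2 := by
      rw [div_eq_mul_one_div]
      exact mul_le_mul_of_nonneg_left hs (mul_nonneg hμ hν)
    linarith [sq_nonneg ‖A + B‖]
  · refine (min_le_right _ _).trans ?_
    have hs0 : 0 ≤ s := nonneg_of_mul_nonneg_right ((norm_nonneg A).trans hA) (by positivity)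
    rw [lt_div_iff₀ (by positivity)] at hs
    have hγs : 3 * γ * s ≤ 3 / 20 := by nlinarith [mul_nonneg hγ0.le hs0]
    have ht399 : √399 / 20 ≤ t := by
      refine (pow_le_pow_iff_left₀ (by positivity) ht two_ne_zero).1 ?_
      rw [div_pow, Real.sq_sqrt (by norm_num)]
      nlinarith [one_le_pow₀ (n := 2) hγ]
    have h399 : 15 ≤ √399 := by
      rw [Real.le_sqrt] <;> norm_num
    have := sq_sub_le_norm_add_sq (hA.trans hγs) (by linarith : √399 / 100 ≤ ‖B‖) (by linarith)
    linarith [mul_nonneg (mul_nonneg hμ hν) (sq_nonneg s)]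

theorem stmt11_general (n p : ℕ)
    (γ ν μ : ℝ) (hγ : 1 < γ) (hν : 0 < ν) (hμ : 0 < μ)
    (X₁ : Matrix (Fin n) (Fin (p - n / 2)) ℝ) (X₂ : Matrix (Fin n) (Fin (n / 2)) ℝ)
    (d : Fin (p - n / 2) ⊕ Fin (n / 2) → ℝ) (hd : ∀ i, 0 ≤ d i)
    (hdν : ∀ i : Fin (p - n / 2), ν ≤ d (Sum.inl i))
    (hX2 : ∀ v : Fin (n / 2) → ℝ, ∑ i, v i ^ 2 = 1 →
      1 / 25 ≤ (1 / (n:ℝ)) * ∑ i, (X₂.mulVec v i) ^ 2)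
    (hX1 : ∀ v : Fin (p - n / 2) → ℝ, ∑ i, v i ^ 2 = 1 →
      (1 / (n:ℝ)) * ∑ i, (X₁.mulVec v i) ^ 2 ≤ 9 * γ ^ 2) :
    ∀ v : Fin (p - n / 2) ⊕ Fin (n / 2) → ℝ, ∑ i, v i ^ 2 = 1 →
      min (μ * ν / (400 * γ ^ 2)) ((Real.sqrt 399 / 100 - 3 / 20) ^ 2) ≤
        v ⬝ᵥ ((((1:ℝ) / n) • ((Matrix.fromCols X₁ X₂)ᵀ * Matrix.fromCols X₁ X₂)
          + μ • Matrix.diagonal d).mulVec v) := by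
  intro v hv
  obtain ⟨a, b, rfl⟩ : ∃ a b, v = Sum.elim a b := ⟨_, _, (Sum.elim_comp_inl_inr v).symm⟩
  have hn : (0 : ℝ) ≤ n := n.cast_nonneg
  have hab : ‖WithLp.toLp 2 a‖ ^ 2 + ‖WithLp.toLp 2 b‖ ^ 2 = 1 := by
    simpa only [EuclideanSpace.real_norm_sq_eq, Fintype.sum_sum_type, Sum.elim_inl,
      Sum.elim_inr] using hv
  have hA := norm_inv_sqrt_smul_toLp_mulVec_le_of_unit (X := X₁) hn (by positivity : 0 ≤ 3 * γ)
    (fun u hu => by rw [← one_div, mul_pow]; linarith [hX1 u hu]) a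
  have hB := mul_norm_le_norm_inv_sqrt_smul_toLp_mulVec_of_unit (X := X₂) hn
    (by norm_num : (0 : ℝ) ≤ 1 / 5) (fun u hu => by rw [← one_div]; linarith [hX2 u hu]) b
  have hdiag := mul_sum_sq_le_sum_mul_sumElim_sq hdν (fun j => hd _) a b
  rw [← EuclideanSpace.real_norm_sq_eq] at hdiag
  rw [dotProduct_mulVec_smul_transpose_mul_add_smul_diagonal, one_div,
    inv_mul_sum_fromCols_mulVec_sumElim_sq hn]
  calc _ ≤ _ + μ * ν * ‖WithLp.toLp 2 a‖ ^ 2 :=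
        min_le_norm_add_sq_add_mul_sq (norm_nonneg _) hab hγ.le hν.le hμ.le hA hB
    _ ≤ _ := by rw [mul_assoc]; gcongr

/-- Let `n` be an even positive integer, `p > n/2`, and
`γ > 1`, `ν > 0`, `μ > 0`. Let `X = [X₁ | X₂] ∈ ℝ^{n×p}` where `X₁` has the
first `p − n/2` columns and `X₂` the last `n/2` columns. Let `Σ = diagonal d`
with nonnegative entries whose first `p − n/2` diagonal entries are `≥ ν`.
If `min_{‖v‖=1} (1/n)‖X₂v‖² ≥ 1/25` and `max_{‖v‖=1} (1/n)‖X₁v‖² ≤ 9γ²`, then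
the minimum eigenvalue of `(1/n)XᵀX + μΣ` (i.e. `min_{‖v‖=1} vᵀMv`) is at
least `min (μν/(400γ²)) ((√399/100 − 3/20)²)`. -/
theorem stmt11 (n p : ℕ) (hn : 0 < n) (hneven : Even n) (hp : n / 2 < p)
    (γ ν μ : ℝ) (hγ : 1 < γ) (hν : 0 < ν) (hμ : 0 < μ)
    (X₁ : Matrix (Fin n) (Fin (p - n / 2)) ℝ) (X₂ : Matrix (Fin n) (Fin (n / 2)) ℝ)
    (d : Fin (p - n / 2) ⊕ Fin (n / 2) → ℝ) (hd : ∀ i, 0 ≤ d i)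
    (hdν : ∀ i : Fin (p - n / 2), ν ≤ d (Sum.inl i))
    (hX2 : ∀ v : Fin (n / 2) → ℝ, ∑ i, v i ^ 2 = 1 →
      1 / 25 ≤ (1 / (n:ℝ)) * ∑ i, (X₂.mulVec v i) ^ 2)
    (hX1 : ∀ v : Fin (p - n / 2) → ℝ, ∑ i, v i ^ 2 = 1 →
      (1 / (n:ℝ)) * ∑ i, (X₁.mulVec v i) ^ 2 ≤ 9 * γ ^ 2) :
    ∀ v : Fin (p - n / 2) ⊕ Fin (n / 2) → ℝ, ∑ i, v i ^ 2 = 1 →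
      min (μ * ν / (400 * γ ^ 2)) ((Real.sqrt 399 / 100 - 3 / 20) ^ 2) ≤
        v ⬝ᵥ ((((1:ℝ) / n) • ((Matrix.fromCols X₁ X₂)ᵀ * Matrix.fromCols X₁ X₂)
          + μ • Matrix.diagonal d).mulVec v) :=
  stmt11_general n p γ ν μ hγ hν hμ X₁ X₂ d hd hdν hX2 hX1
end

section
/- Let X ∈ ℝ^{n×p} with rows x₁,…,xₙ ∈ ℝ^p, and let μ>0. Define S := ((1/n)XᵀX + μI_p)⁻¹ and, for each i, S^{∖i} := ((1/n)XᵀX − (1/n)xᵢxᵢᵀ + μI_p)⁻¹ (both matrices are invertible since μ>0). Then (1/n)·tr( ((1/n)XXᵀ + μI_n)⁻¹ ) = (1/n)·Σ_{i=1}^n 1/( μ + (μ/n)·xᵢᵀ S^{∖i} xᵢ ). -/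
/-!
Write `A = c XᵀX + μ I` and `Bᵢ = A - c xᵢxᵢᵀ` with `c = 1/n`. The push-through identity
`(c XXᵀ + μ I) X = X A` gives `(c XXᵀ + μ I)⁻¹ = μ⁻¹ (I - c X A⁻¹ Xᵀ)`, whose `i`-th diagonal entry is
`μ⁻¹ (1 - c xᵢᵀ A⁻¹ xᵢ)`. Since `A = Bᵢ + c xᵢxᵢᵀ`, Sherman–Morrison turns `1 - c xᵢᵀ A⁻¹ xᵢ` into
`(1 + c xᵢᵀ Bᵢ⁻¹ xᵢ)⁻¹`. Both `A` and `Bᵢ` are invertible, being `μ I` plus a Gram matrix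
(for `Bᵢ`, that of `X` with its `i`-th row replaced by zero).
-/

open Matrix

namespace Matrix

section Field

variable {K : Type*} [Field K] {m k : Type*} [Fintype m] [Fintype k]

theorem inv_smul_mul_transpose_add_smul_one [DecidableEq m] [DecidableEq k] (X : Matrix m k K)
    {c μ : K} (hμ : μ ≠ 0) (hA : IsUnit (c • (Xᵀ * X) + μ • 1)) :
    (c • (X * Xᵀ) + μ • 1)⁻¹ = μ⁻¹ • (1 - c • (X * (c • (Xᵀ * X) + μ • 1)⁻¹ * Xᵀ)) := by
  set A := c • (Xᵀ * X) + μ • (1 : Matrix k k K)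
  have push_through : (c • (X * Xᵀ) + μ • 1) * X = X * A := by
    simp only [A, Matrix.add_mul, Matrix.mul_add, Matrix.smul_mul, Matrix.mul_smul,
      Matrix.one_mul, Matrix.mul_one, Matrix.mul_assoc]
  apply inv_eq_right_inv
  have hXX : (c • (X * Xᵀ) + μ • 1) * (X * A⁻¹ * Xᵀ) = X * Xᵀ := by
    rw [← Matrix.mul_assoc, ← Matrix.mul_assoc, push_through, Matrix.mul_assoc X,
      mul_nonsing_inv _ ((isUnit_iff_isUnit_det A).mp hA), Matrix.mul_one]
  rw [Matrix.mul_smul, Matrix.mul_sub, Matrix.mul_one, Matrix.mul_smul, hXX,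
    add_sub_cancel_left, smul_smul, inv_mul_cancel₀ hμ, one_smul]

theorem one_sub_mul_dotProduct_inv_add_smul_vecMulVec [DecidableEq m] {B : Matrix m m K}
    (v : m → K) (c : K) (hB : IsUnit B) (hA : IsUnit (B + c • vecMulVec v v)) :
    1 - c * (v ⬝ᵥ (B + c • vecMulVec v v)⁻¹ *ᵥ v) = (1 + c * (v ⬝ᵥ B⁻¹ *ᵥ v))⁻¹ := by
  set A := B + c • vecMulVec v v
  set w := B⁻¹ *ᵥ v
  have hBw : B *ᵥ w = v := by
    rw [mulVec_mulVec, mul_nonsing_inv _ ((isUnit_iff_isUnit_det B).mp hB), one_mulVec]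
  have hAw : A *ᵥ w = (1 + c * (v ⬝ᵥ w)) • v := by
    rw [add_mulVec, hBw, smul_mulVec, vecMulVec_mulVec, op_smul_eq_smul, add_smul, one_smul,
      smul_smul]
  have hAinv : A⁻¹ *ᵥ ((1 + c * (v ⬝ᵥ w)) • v) = w := by
    rw [← hAw, mulVec_mulVec, nonsing_inv_mul _ ((isUnit_iff_isUnit_det A).mp hA), one_mulVec]
  have hden : 1 + c * (v ⬝ᵥ w) ≠ 0 := by
    intro h
    rw [h, zero_smul, mulVec_zero] at hAinv
    rw [← hBw, ← hAinv, mulVec_zero, dotProduct_zero, mul_zero, add_zero] at h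
    exact one_ne_zero h
  rw [mulVec_smul, ← eq_inv_smul_iff₀ hden] at hAinv
  rw [hAinv, dotProduct_smul, smul_eq_mul]
  field_simp
  ring

end Field

theorem mul_mul_transpose_apply_self {R : Type*} [Semiring R] {m k : Type*} [Fintype k]
    (X : Matrix m k R) (N : Matrix k k R) (i : m) : (X * N * Xᵀ) i i = X i ⬝ᵥ N *ᵥ X i := by
  simp only [mul_apply, transpose_apply, dotProduct, mulVec, Finset.mul_sum, Finset.sum_mul]
  rw [Finset.sum_comm]
  simp only [mul_assoc]

theorem transpose_mul_updateRow_zero {R : Type*} [Ring R] {m k : Type*} [Fintype m]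
    [DecidableEq m] (X : Matrix m k R) (i : m) :
    (X.updateRow i 0)ᵀ * X.updateRow i 0 = Xᵀ * X - vecMulVec (X i) (X i) := by
  ext a b
  simp only [mul_apply, transpose_apply, updateRow_apply, sub_apply, vecMulVec_apply]
  have hi := Finset.mem_univ i
  rw [← Finset.add_sum_erase _ _ hi, ← Finset.add_sum_erase _ _ hi,
    Finset.sum_congr rfl fun x hx => by
      rw [if_neg (Finset.ne_of_mem_erase hx), if_neg (Finset.ne_of_mem_erase hx)]]
  simp only [if_true, Pi.zero_apply, zero_mul, zero_add, add_sub_cancel_left]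

theorem posDef_smul_transpose_mul_self_add_smul_one {m k : Type*} [Fintype m] [Fintype k]
    [DecidableEq k] (Y : Matrix m k ℝ) {c μ : ℝ} (hc : 0 ≤ c) (hμ : 0 < μ) :
    (c • (Yᵀ * Y) + μ • 1).PosDef := by
  simpa only [conjTranspose_eq_transpose_of_trivial] using
    PosDef.posSemidef_add ((posSemidef_conjTranspose_mul_self Y).smul hc) (PosDef.one.smul hμ)

end Matrix

theorem stmt12_general (n p : ℕ) (μ : ℝ) (hμ : 0 < μ)
    (X : Matrix (Fin n) (Fin p) ℝ)
    (S : Fin n → Matrix (Fin p) (Fin p) ℝ)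
    (hS : ∀ i, S i = (((1:ℝ)/n) • (Xᵀ * X) - ((1:ℝ)/n) • Matrix.vecMulVec (X i) (X i)
      + μ • (1 : Matrix (Fin p) (Fin p) ℝ))⁻¹) :
    (1 / (n:ℝ)) * Matrix.trace ((((1:ℝ)/n) • (X * Xᵀ)
        + μ • (1 : Matrix (Fin n) (Fin n) ℝ))⁻¹) =
    (1 / (n:ℝ)) * ∑ i, 1 / (μ + (μ / n) * (X i ⬝ᵥ (S i).mulVec (X i))) := by
  set c : ℝ := 1 / n
  have hc : 0 ≤ c := by positivity
  have hA := (posDef_smul_transpose_mul_self_add_smul_one X hc hμ).isUnit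
  have hB i : IsUnit (c • (Xᵀ * X) - c • vecMulVec (X i) (X i) + μ • 1) := by
    rw [← smul_sub, ← transpose_mul_updateRow_zero]
    exact (posDef_smul_transpose_mul_self_add_smul_one _ hc hμ).isUnit
  have hA_eq i : c • (Xᵀ * X) + μ • 1
      = (c • (Xᵀ * X) - c • vecMulVec (X i) (X i) + μ • 1) + c • vecMulVec (X i) (X i) := by
    abel
  rw [inv_smul_mul_transpose_add_smul_one X hμ.ne' hA]
  simp only [trace, diag, Matrix.smul_apply, Matrix.sub_apply, one_apply_eq,
    mul_mul_transpose_apply_self, smul_eq_mul]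
  congr 1
  refine Finset.sum_congr rfl fun i _ => ?_
  rw [hA_eq i, one_sub_mul_dotProduct_inv_add_smul_vecMulVec _ _ (hB i)
    (hA_eq i ▸ hA), ← hS, ← mul_inv, one_div]
  congr 1
  ring

/-- Let `X ∈ ℝ^{n×p}` with rows `x₁,…,xₙ` and `μ > 0`. With
`S⁽∖ⁱ⁾ = ((1/n)XᵀX − (1/n)xᵢxᵢᵀ + μI)⁻¹`, one has
`(1/n)·tr(((1/n)XXᵀ + μIₙ)⁻¹) = (1/n)·Σᵢ 1/(μ + (μ/n)·xᵢᵀ S⁽∖ⁱ⁾ xᵢ)`. -/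
theorem stmt12 (n p : ℕ) (hn : 0 < n) (μ : ℝ) (hμ : 0 < μ)
    (X : Matrix (Fin n) (Fin p) ℝ)
    (S : Fin n → Matrix (Fin p) (Fin p) ℝ)
    (hS : ∀ i, S i = (((1:ℝ)/n) • (Xᵀ * X) - ((1:ℝ)/n) • Matrix.vecMulVec (X i) (X i)
      + μ • (1 : Matrix (Fin p) (Fin p) ℝ))⁻¹) :
    (1 / (n:ℝ)) * Matrix.trace ((((1:ℝ)/n) • (X * Xᵀ)
        + μ • (1 : Matrix (Fin n) (Fin n) ℝ))⁻¹) =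
    (1 / (n:ℝ)) * ∑ i, 1 / (μ + (μ / n) * (X i ⬝ᵥ (S i).mulVec (X i))) :=
  stmt12_general n p μ hμ X S hS
end

section
/- Let X ∈ ℝ^{n×p} with n ≤ p and rank(X) = n, and let μ>0. Then the matrix M := Xᵀ(XXᵀ)⁻¹X − (XᵀX + μnI_p)⁻¹XᵀX is positive semidefinite, and tr(M) = Σ_{i=1}^n μ/(λ̃ᵢ + μ), where λ̃₁,…,λ̃ₙ are the eigenvalues of (1/n)XXᵀ. Consequently, for any diagonal positive semidefinite Σ ∈ ℝ^{p×p} with ‖Σ‖₂ ≤ c, one has tr(Σ·M) ≤ c·n·μ/min_i λ̃ᵢ. -/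
/-!
With `a = μ n`, the push-through identity `(XᵀX + a)⁻¹ Xᵀ = Xᵀ (XXᵀ + a)⁻¹` rewrites `M` as
`Xᵀ C X` with `C = (XXᵀ)⁻¹ - (XXᵀ + a)⁻¹`. In the functional calculus of the positive definite
matrix `XXᵀ = n • ((1/n) • XXᵀ)`, `C = g(XXᵀ)` for `g x = x⁻¹ - (x + a)⁻¹ ≥ 0`, so `M` is positive
semidefinite, and `tr M = tr (C XXᵀ) = ∑ᵢ a / (n λ̃ᵢ + a) = ∑ᵢ μ / (λ̃ᵢ + μ)`. For diagonal
`0 ≤ Σ ≤ c`, `tr (Σ M) = ∑ⱼ dⱼ Mⱼⱼ ≤ c tr M` because `Mⱼⱼ ≥ 0`, and each `μ / (λ̃ᵢ + μ)` is at most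
`μ / minᵢ λ̃ᵢ`.
-/

open Matrix

open scoped MatrixOrder ComplexOrder

namespace Matrix

variable {m n 𝕜 : Type*} [Fintype m] [Fintype n] [DecidableEq n] [RCLike 𝕜]

theorem PosSemidef.posDef_of_rank_eq_card {A : Matrix n n 𝕜} (hA : A.PosSemidef)
    (h : A.rank = Fintype.card n) : A.PosDef := by
  refine hA.1.posDef_iff_eigenvalues_pos.mpr fun i => (hA.eigenvalues_nonneg i).lt_of_ne' ?_
  intro h0
  have hlt := Fintype.card_subtype_lt (p := fun j => hA.1.eigenvalues j ≠ 0) (x := i) (by simpa)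
  rw [← hA.1.rank_eq_card_non_zero_eigs, h] at hlt
  exact hlt.false

theorem IsHermitian.trace_cfc {A : Matrix n n 𝕜} (hA : A.IsHermitian) (f : ℝ → ℝ) :
    (cfc f A).trace = ∑ i, (f (hA.eigenvalues i) : 𝕜) := by
  rw [hA.cfc_eq, IsHermitian.cfc, Unitary.conjStarAlgAut_apply, trace_mul_cycle,
    Unitary.coe_star_mul_self, Matrix.one_mul, trace_diagonal]
  rfl

theorem IsHermitian.trace_cfc_smul {A : Matrix n n 𝕜} (hA : A.IsHermitian) (f : ℝ → ℝ) (s : ℝ) :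
    (cfc f (s • A)).trace = ∑ i, (f (s * hA.eigenvalues i) : 𝕜) := by
  rw [← cfc_comp_smul s f A (Set.Finite.continuousOn (A.finite_real_spectrum.image _) f),
    hA.trace_cfc]
  rfl

theorem IsHermitian.inv_add_smul_one_eq_cfc {A : Matrix n n 𝕜} (hA : A.IsHermitian) {a : ℝ}
    (h : ∀ x ∈ spectrum ℝ A, x + a ≠ 0) :
    (A + a • 1)⁻¹ = cfc (fun x => (x + a)⁻¹) A := by
  rw [cfc_inv (· + a) A h (A.finite_real_spectrum.continuousOn _),
    cfc_add_const a (fun x => x) A (A.finite_real_spectrum.continuousOn _), cfc_id' ℝ A,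
    Algebra.algebraMap_eq_smul_one, nonsing_inv_eq_ringInverse]

theorem PosDef.inv_sub_inv_add_smul_one_eq_cfc {A : Matrix n n 𝕜} (hA : A.PosDef) {a : ℝ}
    (ha : 0 ≤ a) : A⁻¹ - (A + a • 1)⁻¹ = cfc (fun x => x⁻¹ - (x + a)⁻¹) A := by
  have hpos : ∀ x ∈ spectrum ℝ A, 0 < x := fun x hx => hA.isStrictlyPositive.spectrum_pos hx
  have hA_inv : A⁻¹ = cfc (fun x : ℝ => (x + 0)⁻¹) A := by
    simpa using hA.1.inv_add_smul_one_eq_cfc (a := 0) fun x hx => by simpa using (hpos x hx).ne'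
  have hA_add_inv := hA.1.inv_add_smul_one_eq_cfc fun x hx =>
    (add_pos_of_pos_of_nonneg (hpos x hx) ha).ne'
  rw [hA_inv, hA_add_inv, ← cfc_sub _ _ A (A.finite_real_spectrum.continuousOn _)
    (A.finite_real_spectrum.continuousOn _)]
  simp

theorem PosDef.posSemidef_inv_sub_inv_add_smul_one {A : Matrix n n 𝕜} (hA : A.PosDef) {a : ℝ}
    (ha : 0 ≤ a) : (A⁻¹ - (A + a • 1)⁻¹).PosSemidef := by
  rw [hA.inv_sub_inv_add_smul_one_eq_cfc ha, ← nonneg_iff_posSemidef]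
  refine cfc_nonneg fun x hx => ?_
  have hx : 0 < x := hA.isStrictlyPositive.spectrum_pos hx
  exact sub_nonneg.mpr (inv_anti₀ hx (le_add_of_nonneg_right ha))

theorem PosDef.inv_sub_inv_add_smul_one_mul_self {A : Matrix n n 𝕜} (hA : A.PosDef) {a : ℝ}
    (ha : 0 ≤ a) : (A⁻¹ - (A + a • 1)⁻¹) * A = cfc (fun x => a / (x + a)) A := by
  rw [hA.inv_sub_inv_add_smul_one_eq_cfc ha]
  nth_rw 2 [← cfc_id' ℝ A]
  rw [← cfc_mul _ _ A (A.finite_real_spectrum.continuousOn _)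
    (A.finite_real_spectrum.continuousOn _)]
  refine cfc_congr fun x hx => ?_
  have hx : 0 < x := hA.isStrictlyPositive.spectrum_pos hx
  field_simp
  ring

theorem nonsing_inv_mul_eq_mul_nonsing_inv_of_mul_eq [DecidableEq m] {R : Type*} [CommRing R]
    {S : Matrix m m R} {T : Matrix n n R} {Y : Matrix m n R} (hS : IsUnit S.det)
    (hT : IsUnit T.det) (h : S * Y = Y * T) : S⁻¹ * Y = Y * T⁻¹ :=
  calc S⁻¹ * Y
      = S⁻¹ * (Y * T) * T⁻¹ := by
        rw [Matrix.mul_assoc, Matrix.mul_assoc Y, mul_nonsing_inv _ hT, Matrix.mul_one]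
    _ = S⁻¹ * (S * Y) * T⁻¹ := by rw [h]
    _ = Y * T⁻¹ := by rw [← Matrix.mul_assoc, nonsing_inv_mul _ hS, Matrix.one_mul]

theorem posDef_transpose_mul_self_add_smul_one (X : Matrix m n ℝ) {a : ℝ} (ha : 0 < a) :
    (Xᵀ * X + a • 1).PosDef := by
  refine PosDef.posSemidef_add ?_ (PosDef.one.smul ha)
  simpa using posSemidef_conjTranspose_mul_self X

theorem inv_transpose_mul_self_add_smul_one_mul_transpose [DecidableEq m] (X : Matrix m n ℝ)
    {a : ℝ} (ha : 0 < a) : (Xᵀ * X + a • 1)⁻¹ * Xᵀ = Xᵀ * (X * Xᵀ + a • 1)⁻¹ := by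
  refine nonsing_inv_mul_eq_mul_nonsing_inv_of_mul_eq
    (posDef_transpose_mul_self_add_smul_one X ha).det_pos.ne'.isUnit ?_ ?_
  · simpa using (posDef_transpose_mul_self_add_smul_one Xᵀ ha).det_pos.ne'.isUnit
  · simp only [Matrix.add_mul, Matrix.mul_add, Matrix.mul_assoc, Matrix.smul_mul,
      Matrix.mul_smul, Matrix.one_mul, Matrix.mul_one]

theorem posDef_self_mul_transpose_of_rank_eq_card {X : Matrix n m ℝ}
    (h : X.rank = Fintype.card n) : (X * Xᵀ).PosDef := by
  refine PosSemidef.posDef_of_rank_eq_card ?_ (by rwa [rank_self_mul_transpose])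
  simpa using posSemidef_self_mul_conjTranspose X

theorem trace_diagonal_mul_le_mul_trace {M : Matrix n n ℝ} (hM : M.PosSemidef) {d : n → ℝ}
    {c : ℝ} (hd : ∀ i, d i ≤ c) : (diagonal d * M).trace ≤ c * M.trace := by
  simp only [trace, diag, diagonal_mul, Finset.mul_sum]
  exact Finset.sum_le_sum fun i _ => mul_le_mul_of_nonneg_right (hd i) hM.diag_nonneg

end Matrix

theorem sum_div_add_le_card_mul_div_iInf {ι : Type*} [Fintype ι] {l : ι → ℝ} (hl : ∀ i, 0 < l i)
    {μ : ℝ} (hμ : 0 ≤ μ) : ∑ i, μ / (l i + μ) ≤ Fintype.card ι * μ / ⨅ i, l i := by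
  cases isEmpty_or_nonempty ι
  · simp
  obtain ⟨i₀, hi₀⟩ := exists_eq_ciInf_of_finite (f := l)
  calc ∑ i, μ / (l i + μ) ≤ ∑ _i : ι, μ / l i₀ := Finset.sum_le_sum fun i _ =>
        div_le_div_of_nonneg_left hμ (hl i₀) <|
          (hi₀ ▸ ciInf_le (Finite.bddBelow_range l) i).trans (le_add_of_nonneg_right hμ)
    _ = Fintype.card ι * μ / ⨅ i, l i := by
        rw [Finset.sum_const, Finset.card_univ, nsmul_eq_mul, hi₀, mul_div_assoc]

/-- Let `X ∈ ℝ^{n×p}` with `n ≤ p`, `rank X = n`, and `μ > 0`.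
Then `M := Xᵀ(XXᵀ)⁻¹X − (XᵀX + μnI)⁻¹XᵀX` is positive semidefinite,
`tr M = Σᵢ μ/(λ̃ᵢ + μ)` where `λ̃ᵢ` are the eigenvalues of `(1/n)XXᵀ`, and for
any diagonal positive-semidefinite `Σ = diagonal d` with all entries `≤ c`
(i.e. operator norm `≤ c`), `tr(Σ·M) ≤ c·n·μ/minᵢ λ̃ᵢ`. -/
theorem stmt14 (n p : ℕ) (hn : 0 < n) (hnp : n ≤ p) (μ : ℝ) (hμ : 0 < μ)
    (X : Matrix (Fin n) (Fin p) ℝ) (hrank : X.rank = n)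
    (M : Matrix (Fin p) (Fin p) ℝ)
    (hM : M = Xᵀ * (X * Xᵀ)⁻¹ * X -
      (Xᵀ * X + (μ * n) • (1 : Matrix (Fin p) (Fin p) ℝ))⁻¹ * (Xᵀ * X))
    (hH : (((1:ℝ)/n) • (X * Xᵀ)).IsHermitian) :
    M.PosSemidef ∧
    Matrix.trace M = ∑ i, μ / (hH.eigenvalues i + μ) ∧
    ∀ (c : ℝ) (d : Fin p → ℝ), (Matrix.diagonal d).PosSemidef → (∀ i, d i ≤ c) →
      Matrix.trace (Matrix.diagonal d * M) ≤ c * n * μ / (⨅ i, hH.eigenvalues i) := by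
  have hn' : (0 : ℝ) < n := Nat.cast_pos.mpr hn
  have ha : 0 < μ * n := mul_pos hμ hn'
  have hXXt : (X * Xᵀ).PosDef := posDef_self_mul_transpose_of_rank_eq_card (by simpa using hrank)
  have hl : ∀ i, 0 < hH.eigenvalues i := (hXXt.smul (one_div_pos.mpr hn')).eigenvalues_pos
  have hXXt_eq : X * Xᵀ = (n : ℝ) • ((1 / n : ℝ) • (X * Xᵀ)) := by
    rw [smul_smul, mul_one_div_cancel hn'.ne', one_smul]
  have hMC : M = Xᵀ * ((X * Xᵀ)⁻¹ - (X * Xᵀ + (μ * n) • 1)⁻¹) * X := by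
    rw [hM, ← Matrix.mul_assoc, inv_transpose_mul_self_add_smul_one_mul_transpose X ha,
      Matrix.mul_sub, Matrix.sub_mul]
  have hMpsd : M.PosSemidef := by
    simpa [hMC] using (hXXt.posSemidef_inv_sub_inv_add_smul_one ha.le).conjTranspose_mul_mul_same X
  have htr : M.trace = ∑ i, μ / (hH.eigenvalues i + μ) := by
    rw [hMC, trace_mul_cycle, trace_mul_comm, hXXt.inv_sub_inv_add_smul_one_mul_self ha.le]
    conv_lhs => rw [hXXt_eq]
    rw [hH.trace_cfc_smul]
    refine Finset.sum_congr rfl fun i _ => ?_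
    have hli := hl i
    simp only [RCLike.ofReal_real_eq_id, id]
    field_simp
  refine ⟨hMpsd, htr, fun c d hd hdc => ?_⟩
  have hc : 0 ≤ c := (posSemidef_diagonal_iff.mp hd ⟨0, hn.trans_le hnp⟩).trans (hdc _)
  calc (diagonal d * M).trace ≤ c * M.trace := trace_diagonal_mul_le_mul_trace hMpsd hdc
    _ ≤ c * (n * μ / ⨅ i, hH.eigenvalues i) := by
      gcongr
      simpa [htr] using sum_div_add_le_card_mul_div_iInf hl hμ.le
    _ = c * n * μ / ⨅ i, hH.eigenvalues i := by ring
end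

section
/- Fix constants β∈(0,1) and σ≥0. Define h(α) := β/α + ln α − 1 − σ² for α∈(0,β] and R(α) := (ln(1/α) + σ²)·β/(β−α) for α∈(0,β). Then h has a unique zero α* in (0,β); R is strictly decreasing on (0,α*] and strictly increasing on [α*,β); and the minimum of R over (0,β) equals R(α*) = β/α*. -/
open Set Real Filter Topology

/-!
Since `h' α = (α - β) / α²`, `h` is strictly decreasing on `(0, β]`; it tends to `+∞` at `0⁺`
(because `α log α → 0`) and `h β = log β - σ² < 0`, which gives the unique zero `α*`.
A direct computation gives `R' α = -β h(α) / (β - α)²`, so `R` decreases before `α*` and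
increases after it, and at `α*` the relation `log α* = 1 + σ² - β / α*` collapses `R α*`
to `β / α*`.
-/

/-- The function `h` of the statement, with `s` in place of `σ²`. -/
noncomputable def pcrStationarity (β s α : ℝ) : ℝ := β / α + log α - 1 - s

/-- The risk `R` of the statement, with `s` in place of `σ²` and `log (1 / α)` as `-log α`. -/
noncomputable def pcrRisk (β s α : ℝ) : ℝ := (s - log α) * β / (β - α)

section

variable {β s α : ℝ}

theorem hasDerivAt_pcrStationarity (hα : α ≠ 0) :
    HasDerivAt (pcrStationarity β s) ((α - β) / α ^ 2) α := by
  have hd : HasDerivAt (fun x => β * x⁻¹ + log x - 1 - s) (β * -(α ^ 2)⁻¹ + α⁻¹) α :=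
    ((((hasDerivAt_inv hα).const_mul β).add (hasDerivAt_log hα)).sub_const 1).sub_const s
  convert hd using 1
  · ext x
    rw [pcrStationarity, div_eq_mul_inv]
  field_simp
  ring

theorem strictAntiOn_pcrStationarity : StrictAntiOn (pcrStationarity β s) (Ioc 0 β) := by
  refine strictAntiOn_of_deriv_neg (convex_Ioc 0 β)
    (fun x hx => (hasDerivAt_pcrStationarity hx.1.ne').continuousAt.continuousWithinAt) ?_
  intro x hx
  rw [interior_Ioc] at hx
  rw [(hasDerivAt_pcrStationarity hx.1.ne').deriv]
  exact div_neg_of_neg_of_pos (sub_neg.mpr hx.2) (pow_pos hx.1 2)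

theorem tendsto_pcrStationarity_nhdsGT_zero (hβ : 0 < β) :
    Tendsto (pcrStationarity β s) (𝓝[>] 0) atTop := by
  have hmul : Tendsto (fun x => β + x * log x) (𝓝[>] 0) (𝓝 β) := by
    have := (continuous_mul_log.tendsto 0).mono_left (nhdsWithin_le_nhds (s := Ioi 0))
    simpa using this.const_add β
  have hprod := hmul.pos_mul_atTop hβ tendsto_inv_nhdsGT_zero
  refine (tendsto_atTop_add_const_right _ (-1 - s) hprod).congr' ?_
  filter_upwards [self_mem_nhdsWithin] with x (hx : 0 < x)
  simp only [pcrStationarity]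
  field_simp
  ring

theorem exists_pcrStationarity_eq_zero (hβ : 0 < β) (hs : log β < s) :
    ∃ αs ∈ Ioo 0 β, pcrStationarity β s αs = 0 := by
  obtain ⟨a, ha_pos, ha⟩ :=
    (((tendsto_pcrStationarity_nhdsGT_zero (s := s) hβ).eventually_gt_atTop 0).and
      (Ioo_mem_nhdsGT hβ)).exists
  have hβ_neg : pcrStationarity β s β < 0 := by
    simp only [pcrStationarity, div_self hβ.ne']
    linarith
  have hcont : ContinuousOn (pcrStationarity β s) (Icc a β) := fun x hx =>
    (hasDerivAt_pcrStationarity (ha.1.trans_le hx.1).ne').continuousAt.continuousWithinAt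
  obtain ⟨αs, hαs, hzero⟩ := intermediate_value_Ioo' ha.2.le hcont ⟨hβ_neg, ha_pos⟩
  exact ⟨αs, ⟨ha.1.trans hαs.1, hαs.2⟩, hzero⟩

theorem hasDerivAt_pcrRisk (hα : α ≠ 0) (hαβ : α ≠ β) :
    HasDerivAt (pcrRisk β s) (-β * pcrStationarity β s α / (β - α) ^ 2) α := by
  have hβα : β - α ≠ 0 := sub_ne_zero.mpr hαβ.symm
  have hd : HasDerivAt (fun x => (s - log x) * β / (β - x))
      (((0 - α⁻¹) * β * (β - α) - (s - log α) * β * (0 - 1)) / (β - α) ^ 2) α :=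
    (((hasDerivAt_const α s).sub (hasDerivAt_log hα)).mul_const β).div
      ((hasDerivAt_const α β).sub (hasDerivAt_id α)) hβα
  convert hd using 1
  · rfl
  · unfold pcrStationarity
    field_simp
    ring

theorem pcrRisk_eq_of_pcrStationarity_eq_zero (hα : α ≠ 0) (hαβ : α ≠ β)
    (hzero : pcrStationarity β s α = 0) : pcrRisk β s α = β / α := by
  have hlog : log α = 1 + s - β / α := by
    simp only [pcrStationarity] at hzero
    linarith
  have hβα : β - α ≠ 0 := sub_ne_zero.mpr hαβ.symm
  rw [pcrRisk, hlog]
  field_simp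
  ring

variable {αs : ℝ}

theorem continuousOn_pcrRisk : ContinuousOn (pcrRisk β s) (Ioo 0 β) := fun _ hx =>
  (hasDerivAt_pcrRisk hx.1.ne' hx.2.ne).continuousAt.continuousWithinAt

theorem strictAntiOn_pcrRisk (hαs : αs ∈ Ioo 0 β)
    (hzero : pcrStationarity β s αs = 0) : StrictAntiOn (pcrRisk β s) (Ioc 0 αs) := by
  have hsub : Ioc 0 αs ⊆ Ioo 0 β := fun x hx => ⟨hx.1, hx.2.trans_lt hαs.2⟩
  refine strictAntiOn_of_deriv_neg (convex_Ioc 0 αs) (continuousOn_pcrRisk.mono hsub) ?_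
  intro x hx
  rw [interior_Ioc] at hx
  have hxβ : x < β := hx.2.trans hαs.2
  have hpos : 0 < pcrStationarity β s x := hzero ▸
    strictAntiOn_pcrStationarity ⟨hx.1, hxβ.le⟩ ⟨hαs.1, hαs.2.le⟩ hx.2
  rw [(hasDerivAt_pcrRisk hx.1.ne' hxβ.ne).deriv]
  exact div_neg_of_neg_of_pos (mul_neg_of_neg_of_pos (neg_lt_zero.mpr (hx.1.trans hxβ)) hpos)
    (pow_pos (sub_pos.mpr hxβ) 2)

theorem strictMonoOn_pcrRisk (hαs : αs ∈ Ioo 0 β)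
    (hzero : pcrStationarity β s αs = 0) : StrictMonoOn (pcrRisk β s) (Ico αs β) := by
  have hsub : Ico αs β ⊆ Ioo 0 β := fun x hx => ⟨hαs.1.trans_le hx.1, hx.2⟩
  refine strictMonoOn_of_deriv_pos (convex_Ico αs β) (continuousOn_pcrRisk.mono hsub) ?_
  intro x hx
  rw [interior_Ico] at hx
  have hx0 : 0 < x := hαs.1.trans hx.1
  have hneg : pcrStationarity β s x < 0 := hzero ▸
    strictAntiOn_pcrStationarity ⟨hαs.1, hαs.2.le⟩ ⟨hx0, hx.2.le⟩ hx.1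
  rw [(hasDerivAt_pcrRisk hx0.ne' hx.2.ne).deriv]
  exact div_pos (mul_pos_of_neg_of_neg (neg_lt_zero.mpr (hx0.trans hx.2)) hneg)
    (pow_pos (sub_pos.mpr hx.2) 2)

end

theorem stmt15_general (β σ : ℝ) (hβ : β ∈ Set.Ioo (0:ℝ) 1)
    (h R : ℝ → ℝ)
    (hh : ∀ α, h α = β / α + Real.log α - 1 - σ ^ 2)
    (hR : ∀ α, R α = (Real.log (1/α) + σ ^ 2) * β / (β - α)) :
    ∃ αs, (αs ∈ Set.Ioo (0:ℝ) β ∧ h αs = 0) ∧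
      (∀ α ∈ Set.Ioo (0:ℝ) β, h α = 0 → α = αs) ∧
      StrictAntiOn R (Set.Ioc (0:ℝ) αs) ∧ StrictMonoOn R (Set.Ico αs β) ∧
      (∀ α ∈ Set.Ioo (0:ℝ) β, R αs ≤ R α) ∧
      R αs = β / αs := by
  obtain rfl : h = pcrStationarity β (σ ^ 2) := funext hh
  obtain rfl : R = pcrRisk β (σ ^ 2) := funext fun α => by
    rw [hR, pcrRisk, one_div, log_inv, neg_add_eq_sub]
  have hs : log β < σ ^ 2 := (log_neg hβ.1 hβ.2).trans_le (sq_nonneg σ)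
  obtain ⟨αs, hαs, hzero⟩ := exists_pcrStationarity_eq_zero hβ.1 hs
  have hanti := strictAntiOn_pcrRisk hαs hzero
  have hmono := strictMonoOn_pcrRisk hαs hzero
  refine ⟨αs, ⟨hαs, hzero⟩, fun α hα hα0 => ?_, hanti, hmono, fun α hα => ?_,
    pcrRisk_eq_of_pcrStationarity_eq_zero hαs.1.ne' hαs.2.ne hzero⟩
  · exact strictAntiOn_pcrStationarity.injOn ⟨hα.1, hα.2.le⟩ ⟨hαs.1, hαs.2.le⟩
      (hα0.trans hzero.symm)
  · rcases le_total α αs with hle | hle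
    · exact hanti.antitoneOn ⟨hα.1, hle⟩ ⟨hαs.1, le_rfl⟩ hle
    · exact hmono.monotoneOn ⟨le_rfl, hαs.2⟩ ⟨hle, hα.2⟩ hle

/-- Fix β ∈ (0,1) and σ ≥ 0. With
`h α = β/α + ln α − 1 − σ²` on `(0,β]` and `R α = (ln(1/α) + σ²)·β/(β−α)` on
`(0,β)`: `h` has a unique zero `α*` in `(0,β)`, `R` is strictly decreasing on
`(0,α*]` and strictly increasing on `[α*,β)`, and the minimum of `R` over
`(0,β)` equals `R α* = β/α*`. -/
theorem stmt15 (β σ : ℝ) (hβ : β ∈ Set.Ioo (0:ℝ) 1) (hσ : 0 ≤ σ)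
    (h R : ℝ → ℝ)
    (hh : ∀ α, h α = β / α + Real.log α - 1 - σ ^ 2)
    (hR : ∀ α, R α = (Real.log (1/α) + σ ^ 2) * β / (β - α)) :
    ∃ αs, (αs ∈ Set.Ioo (0:ℝ) β ∧ h αs = 0) ∧
      (∀ α ∈ Set.Ioo (0:ℝ) β, h α = 0 → α = αs) ∧
      StrictAntiOn R (Set.Ioc (0:ℝ) αs) ∧ StrictMonoOn R (Set.Ico αs β) ∧
      (∀ α ∈ Set.Ioo (0:ℝ) β, R αs ≤ R α) ∧
      R αs = β / αs :=
  stmt15_general β σ hβ h R hh hR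
end

section
/- Let δ∈(0,1], β∈(0,δ), η₁>0, and let f be a continuous probability density supported on [η₁,∞) with ∫_{η₁}^∞ t·f(t) dt < ∞. Fix ν ≥ 0 with δ·∫_ν^∞ f(t) dt > β, and define q_f(s,ν) := s·β − s·δ·∫_ν^∞ t·f(t)/(s+t) dt for s>0. Then s ↦ q_f(s,ν)/s is strictly increasing on (0,∞), with limit β − δ·∫_ν^∞ f(t) dt < 0 as s→0⁺ and limit β > 0 as s→∞. Consequently, the equation q_f(s,ν)=0 has exactly one solution s*_f in (0,∞). -/
open Set Filter MeasureTheory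

/-- Let δ ∈ (0,1], β ∈ (0,δ), η₁ > 0, and let `f` be a
continuous probability density supported on `[η₁,∞)` with finite first moment.
Fix `ν ≥ 0` with `δ·∫_ν^∞ f > β`, and let
`q s = sβ − sδ·∫_ν^∞ t f(t)/(s+t) dt` for `s > 0`. Then `s ↦ q s / s` is
strictly increasing on `(0,∞)`, with limit `β − δ·∫_ν^∞ f < 0` as `s → 0⁺`
and limit `β > 0` as `s → ∞`; consequently `q s = 0` has exactly one solution
in `(0,∞)`. -/
theorem stmt17 (δ β η₁ ν : ℝ) (hδ : δ ∈ Set.Ioc (0:ℝ) 1) (hβ : β ∈ Set.Ioo 0 δ)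
    (hη : 0 < η₁)
    (f : ℝ → ℝ) (hfc : Continuous f) (hf0 : ∀ t, 0 ≤ f t)
    (hsupp : ∀ t, t < η₁ → f t = 0)
    (hprob : ∫ t in Set.Ioi η₁, f t = 1)
    (hmom : MeasureTheory.IntegrableOn (fun t => t * f t) (Set.Ioi η₁))
    (hν : 0 ≤ ν) (hνβ : β < δ * ∫ t in Set.Ioi ν, f t)
    (q : ℝ → ℝ)
    (hq : ∀ s, q s = s * β - s * δ * ∫ t in Set.Ioi ν, t * f t / (s + t)) :
    StrictMonoOn (fun s => q s / s) (Set.Ioi (0:ℝ)) ∧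
    Filter.Tendsto (fun s => q s / s) (nhdsWithin 0 (Set.Ioi 0))
      (nhds (β - δ * ∫ t in Set.Ioi ν, f t)) ∧
    β - δ * (∫ t in Set.Ioi ν, f t) < 0 ∧
    Filter.Tendsto (fun s => q s / s) Filter.atTop (nhds β) ∧
    (0:ℝ) < β ∧
    (∃! s, s ∈ Set.Ioi (0:ℝ) ∧ q s = 0) := by
  obtain ⟨hδ0, hδ1⟩ := hδ
  obtain ⟨hβ0, hβδ⟩ := hβ
  set J := ∫ t in Set.Ioi ν, f t with hJ
  set I : ℝ → ℝ := fun s => ∫ t in Set.Ioi ν, t * f t / (s + t) with hIdef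
  -- f vanishes on Iic η₁
  have hfη : f η₁ = 0 := by
    have h1 : Tendsto f (nhdsWithin η₁ (Iio η₁)) (nhds (f η₁)) :=
      (hfc.continuousWithinAt).tendsto
    have h2 : Tendsto f (nhdsWithin η₁ (Iio η₁)) (nhds 0) := by
      apply Tendsto.congr' _ tendsto_const_nhds
      filter_upwards [self_mem_nhdsWithin] with t ht
      exact (hsupp t ht).symm
    exact tendsto_nhds_unique h1 h2
  have hfIic : ∀ t, t ≤ η₁ → f t = 0 := by
    intro t ht
    rcases lt_or_eq_of_le ht with h | h
    · exact hsupp t h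
    · rw [h]; exact hfη
  -- integrability of f on Ioi η₁
  have hfint1 : IntegrableOn f (Ioi η₁) := by
    by_contra h
    rw [integral_undef h] at hprob
    exact zero_ne_one hprob
  have hsplit : Ioi ν ⊆ Ioc ν η₁ ∪ Ioi η₁ := by
    intro t ht
    rcases le_or_gt t η₁ with h | h
    · exact Or.inl ⟨ht, h⟩
    · exact Or.inr h
  have hfν : IntegrableOn f (Ioi ν) := by
    have h0 : IntegrableOn f (Ioc ν η₁) := by
      have heq : EqOn f (fun _ => (0:ℝ)) (Ioc ν η₁) := fun t ht => hfIic t ht.2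
      exact (integrableOn_congr_fun heq measurableSet_Ioc).mpr (integrableOn_zero)
    exact (h0.union hfint1).mono_set hsplit
  -- bound and measurability of the kernel
  have hbound : ∀ s : ℝ, 0 < s → ∀ t : ℝ, t ∈ Ioi ν →
      ‖t * f t / (s + t)‖ ≤ ‖f t‖ := by
    intro s hs t ht
    have htpos : 0 < t := lt_of_le_of_lt hν ht
    have hst : 0 < s + t := by linarith
    rw [Real.norm_eq_abs, Real.norm_eq_abs, abs_of_nonneg (hf0 t),
      abs_of_nonneg (div_nonneg (mul_nonneg htpos.le (hf0 t)) hst.le)]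
    rw [div_le_iff₀ hst]
    nlinarith [hf0 t]
  have hmeas : ∀ s : ℝ, 0 < s →
      AEStronglyMeasurable (fun t => t * f t / (s + t))
        (volume.restrict (Ioi ν)) := by
    intro s hs
    apply ContinuousOn.aestronglyMeasurable _ measurableSet_Ioi
    apply ContinuousOn.div
    · exact (continuous_id.mul hfc).continuousOn
    · exact (continuous_const.add continuous_id).continuousOn
    · intro t ht
      have : 0 < t := lt_of_le_of_lt hν ht
      positivity
  have hIs : ∀ s : ℝ, 0 < s → IntegrableOn (fun t => t * f t / (s + t)) (Ioi ν) := by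
    intro s hs
    apply Integrable.mono hfν (hmeas s hs)
    filter_upwards [ae_restrict_mem measurableSet_Ioi] with t ht
    exact hbound s hs t ht
  -- q s / s = β - δ * I s
  have hg : ∀ s : ℝ, s ≠ 0 → q s / s = β - δ * I s := by
    intro s hs
    rw [hq s]
    field_simp
    ring
  -- positivity facts
  have hJpos : 0 < J := by nlinarith
  have ht₀ : ∃ t₀ ∈ Ioi ν, 0 < f t₀ := by
    by_contra h
    push_neg at h
    have hzero : J = 0 := by
      rw [hJ]
      rw [setIntegral_congr_fun measurableSet_Ioi
        (fun t ht => le_antisymm (h t ht) (hf0 t) : EqOn f (fun _ => (0:ℝ)) (Ioi ν))]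
      simp
    linarith
  obtain ⟨t₀, ht₀ν, ht₀f⟩ := ht₀
  -- I is strictly antitone on (0,∞)
  have hIanti : ∀ a b : ℝ, 0 < a → a < b → I b < I a := by
    intro a b ha hab
    have hb : 0 < b := ha.trans hab
    set h := fun t => t * f t / (a + t) - t * f t / (b + t) with hh
    have hint : IntegrableOn h (Ioi ν) := (hIs a ha).sub (hIs b hb)
    have key : 0 < ∫ t in Ioi ν, h t := by
      rw [setIntegral_pos_iff_support_of_nonneg_ae _ hint]
      · have hopen : IsOpen {t : ℝ | ν < t ∧ 0 < f t} :=
          (isOpen_lt continuous_const continuous_id).inter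
            (isOpen_lt continuous_const hfc)
        have hsub : {t : ℝ | ν < t ∧ 0 < f t} ⊆ Function.support h ∩ Ioi ν := by
          intro t ⟨htν, htf⟩
          have htpos : 0 < t := lt_of_le_of_lt hν htν
          have h1 : 0 < t * f t := mul_pos htpos htf
          have h2 : t * f t / (b + t) < t * f t / (a + t) :=
            div_lt_div_of_pos_left h1 (by linarith) (by linarith)
          refine ⟨?_, htν⟩
          simp only [Function.mem_support, hh]
          intro hcon
          rw [sub_eq_zero] at hcon
          linarith
        have hpos : (0 : ENNReal) < volume {t : ℝ | ν < t ∧ 0 < f t} :=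
          hopen.measure_pos volume ⟨t₀, ht₀ν, ht₀f⟩
        exact lt_of_lt_of_le hpos (measure_mono hsub)
      · filter_upwards [ae_restrict_mem measurableSet_Ioi] with t ht
        have htpos : 0 < t := lt_of_le_of_lt hν ht
        have hnn : 0 ≤ t * f t := mul_nonneg htpos.le (hf0 t)
        have hle : t * f t / (b + t) ≤ t * f t / (a + t) := by gcongr
        simpa [hh, sub_nonneg] using hle
    have heq : I a - I b = ∫ t in Ioi ν, h t := by
      rw [hIdef]
      exact (integral_sub (hIs a ha) (hIs b hb)).symm
    linarith
  have hmono : StrictMonoOn (fun s => q s / s) (Ioi (0:ℝ)) := by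
    intro a ha b hb hab
    simp only
    rw [hg a (ne_of_gt ha), hg b (ne_of_gt hb)]
    have := hIanti a b ha hab
    nlinarith
  -- limit as s → 0⁺
  have hlim0I : Tendsto I (nhdsWithin 0 (Ioi 0)) (nhds J) := by
    apply tendsto_integral_filter_of_dominated_convergence f
    · filter_upwards [self_mem_nhdsWithin] with s hs
      exact hmeas s hs
    · filter_upwards [self_mem_nhdsWithin] with s hs
      filter_upwards [ae_restrict_mem measurableSet_Ioi] with t ht
      simpa [Real.norm_eq_abs, abs_of_nonneg (hf0 t)] using hbound s hs t ht
    · exact hfν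
    · filter_upwards [ae_restrict_mem measurableSet_Ioi] with t ht
      have htpos : 0 < t := lt_of_le_of_lt hν ht
      have hc : ContinuousAt (fun s : ℝ => t * f t / (s + t)) 0 := by
        apply ContinuousAt.div continuousAt_const
        · exact (continuous_id.add continuous_const).continuousAt
        · simpa using htpos.ne'
      have h5 : Tendsto (fun s : ℝ => t * f t / (s + t)) (nhdsWithin 0 (Ioi 0))
          (nhds (t * f t / (0 + t))) := hc.tendsto.mono_left nhdsWithin_le_nhds
      simpa [zero_add, mul_div_cancel_left₀ (f t) htpos.ne'] using h5
  have hlim0 : Tendsto (fun s => q s / s) (nhdsWithin 0 (Ioi 0)) (nhds (β - δ * J)) := by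
    have h1 : Tendsto (fun s => β - δ * I s) (nhdsWithin 0 (Ioi 0)) (nhds (β - δ * J)) :=
      tendsto_const_nhds.sub (tendsto_const_nhds.mul hlim0I)
    apply h1.congr'
    filter_upwards [self_mem_nhdsWithin] with s hs
    exact (hg s (ne_of_gt hs)).symm
  have hlt : β - δ * J < 0 := by linarith
  -- limit as s → ∞
  have hlimtopI : Tendsto I atTop (nhds 0) := by
    have h0 : (0:ℝ) = ∫ t in Ioi ν, (0:ℝ) := by simp
    rw [h0]
    apply tendsto_integral_filter_of_dominated_convergence f
    · filter_upwards [eventually_gt_atTop (0:ℝ)] with s hs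
      exact hmeas s hs
    · filter_upwards [eventually_gt_atTop (0:ℝ)] with s hs
      filter_upwards [ae_restrict_mem measurableSet_Ioi] with t ht
      simpa [Real.norm_eq_abs, abs_of_nonneg (hf0 t)] using hbound s hs t ht
    · exact hfν
    · apply ae_of_all
      intro t
      have h1 : Tendsto (fun s : ℝ => s + t) atTop atTop :=
        tendsto_atTop_add_const_right _ t tendsto_id
      have h2 : Tendsto (fun s : ℝ => (s + t)⁻¹) atTop (nhds 0) :=
        h1.inv_tendsto_atTop
      have h3 : Tendsto (fun s : ℝ => t * f t * (s + t)⁻¹) atTop (nhds (t * f t * 0)) :=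
        tendsto_const_nhds.mul h2
      simpa [div_eq_mul_inv] using h3
  have hlimtop : Tendsto (fun s => q s / s) atTop (nhds β) := by
    have h1 : Tendsto (fun s => β - δ * I s) atTop (nhds β) := by
      have h2 : Tendsto (fun s => β - δ * I s) atTop (nhds (β - δ * 0)) :=
        tendsto_const_nhds.sub (tendsto_const_nhds.mul hlimtopI)
      simpa using h2
    apply h1.congr'
    filter_upwards [eventually_gt_atTop (0:ℝ)] with s hs
    exact (hg s (ne_of_gt hs)).symm
  -- continuity of q s / s on (0,∞)
  have hcont : ∀ s₀ : ℝ, 0 < s₀ → ContinuousAt (fun s => q s / s) s₀ := by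
    intro s₀ hs₀
    have hIoi : Ioi (0:ℝ) ∈ nhds s₀ := Ioi_mem_nhds hs₀
    have hIcont : Tendsto I (nhdsWithin s₀ (Ioi 0)) (nhds (I s₀)) := by
      apply tendsto_integral_filter_of_dominated_convergence f
      · filter_upwards [self_mem_nhdsWithin] with s hs
        exact hmeas s hs
      · filter_upwards [self_mem_nhdsWithin] with s hs
        filter_upwards [ae_restrict_mem measurableSet_Ioi] with t ht
        simpa [Real.norm_eq_abs, abs_of_nonneg (hf0 t)] using hbound s hs t ht
      · exact hfν
      · filter_upwards [ae_restrict_mem measurableSet_Ioi] with t ht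
        have htpos : 0 < t := lt_of_le_of_lt hν ht
        have hc : ContinuousAt (fun s : ℝ => t * f t / (s + t)) s₀ := by
          apply ContinuousAt.div continuousAt_const
          · exact (continuous_id.add continuous_const).continuousAt
          · positivity
        exact hc.tendsto.mono_left nhdsWithin_le_nhds
    have hIcont' : ContinuousAt I s₀ := by
      rw [← continuousWithinAt_iff_continuousAt hIoi]
      exact hIcont
    have hgc : ContinuousAt (fun s => β - δ * I s) s₀ :=
      continuousAt_const.sub (continuousAt_const.mul hIcont')
    apply hgc.congr
    filter_upwards [hIoi] with s hs
    exact (hg s (ne_of_gt hs)).symm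
  -- existence and uniqueness
  have hexu : ∃! s, s ∈ Set.Ioi (0:ℝ) ∧ q s = 0 := by
    have h1 : ∀ᶠ s in nhdsWithin 0 (Ioi 0), q s / s < 0 :=
      hlim0.eventually_lt_const hlt
    obtain ⟨s₁, hs₁g, hs₁pos⟩ := (h1.and self_mem_nhdsWithin).exists
    have h2 : ∀ᶠ s in atTop, 0 < q s / s := hlimtop.eventually_const_lt hβ0
    obtain ⟨s₂, hs₂g, hs₂gt⟩ := (h2.and (eventually_gt_atTop s₁)).exists
    have hconton : ContinuousOn (fun s => q s / s) (Icc s₁ s₂) := by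
      intro s hs
      exact (hcont s (lt_of_lt_of_le hs₁pos hs.1)).continuousWithinAt
    have h0mem : (0:ℝ) ∈ Ioo (q s₁ / s₁) (q s₂ / s₂) := ⟨hs₁g, hs₂g⟩
    obtain ⟨s₃, hs₃mem, hs₃val⟩ := intermediate_value_Ioo hs₂gt.le hconton h0mem
    have hs₃pos : 0 < s₃ := hs₁pos.trans hs₃mem.1
    have hq₃ : q s₃ = 0 := by
      rcases div_eq_zero_iff.mp hs₃val with h | h
      · exact h
      · exact absurd h (ne_of_gt hs₃pos)
    refine ⟨s₃, ⟨hs₃pos, hq₃⟩, ?_⟩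
    intro y ⟨hy1, hy2⟩
    apply hmono.injOn hy1 hs₃pos
    simp only
    rw [hy2, hq₃, zero_div, zero_div]
  exact ⟨hmono, hlim0, hlt, hlimtop, hβ0, hexu⟩
end
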